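/- arXiv:1411.0402 — 12 statements merged into one kernel-verified Lean document; each statement's English description precedes it below -/
import Mathlib

section
/- Let S be a finite family of quasi-convex sets between two horizontal lines, modeled abstractly as follows: each element v has a base segment given by two real numbers v¹ and v² (its x-coordinates on the bottom and top lines). Two base segments s_u = (u¹,u²) and s_v = (v¹,v²) cross (intersect) if and only if (u¹ - v¹)(u² - v²) ≤ 0. For an element v, let α_v be the maximum length of a sequence (v = v₁, v₂, …, v_k) of elements all presented no later than v whose bottom coordinates are nondecreasing and top coordinates are nonincreasing, and let β_v be the maximum length of such a sequence with bottom coordinates nonincreasing and top coordinates nondecreasing. If every pairwise-crossing subfamily of base segments has size at most ω, then α_v + β_v ≤ ω + 1 for every v. -/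
/-!
Let `A` be an increasing-decreasing sequence from `i` and `B` a decreasing-increasing one.
Every element of `A` lies weakly right of `i` on the bottom line and weakly left of it on the
top line, and every element of `B` the other way round; so all of `A ∪ B` is a chain for one
preorder on the plane, and comparable points have crossing segments. Hence `A ∪ B` is a
crossing family. Since bottom coordinates are distinct, `A` and `B` share only `i`, so
`|A| + |B| - 1 = |A ∪ B| ≤ ω`.
-/

section Chains

variable {α : Type*} {r : α → α → Prop} [IsPreorder α r]

theorem List.IsChain.rel_head_of_mem {i x : α} {l : List α} (h : (i :: l).IsChain r)
    (hx : x ∈ i :: l) : r i x := by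
  rcases List.mem_cons.mp hx with rfl | hx
  · exact refl x
  · exact h.rel_cons hx

theorem List.IsChain.isChain_toFinset [DecidableEq α] {l : List α} (h : l.IsChain r) :
    _root_.IsChain r (l.toFinset : Set α) := by
  have : Std.Symm fun a b ↦ r a b ∨ r b a := ⟨fun _ _ ↦ Or.symm⟩
  rw [List.coe_toFinset]
  exact (h.pairwise.imp Or.inl).set_pairwise

theorem isChain_toFinset_union_of_isChain_cons [DecidableEq α] {i : α} {A B : List α}
    (hA : (i :: A).IsChain r) (hB : (i :: B).IsChain (Function.swap r)) :
    IsChain r (((i :: A).toFinset ∪ (i :: B).toFinset : Finset α) : Set α) := by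
  rw [Finset.coe_union, isChain_union]
  refine ⟨hA.isChain_toFinset, hB.isChain_toFinset.symm, fun a ha b hb _ ↦ Or.inr ?_⟩
  exact _root_.trans (hB.rel_head_of_mem (List.mem_toFinset.mp hb))
    (hA.rel_head_of_mem (List.mem_toFinset.mp ha))

end Chains

theorem List.card_toFinset_union_add_one {α : Type*} [DecidableEq α] {i : α} {A B : List α}
    (hA : (i :: A).Nodup) (hB : (i :: B).Nodup) (hAB : ∀ x ∈ i :: A, x ∈ i :: B → x = i) :
    ((i :: A).toFinset ∪ (i :: B).toFinset).card + 1 = (i :: A).length + (i :: B).length := by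
  have hinter : (i :: A).toFinset ∩ (i :: B).toFinset = {i} := by
    ext x
    simp only [Finset.mem_inter, List.mem_toFinset, Finset.mem_singleton]
    exact ⟨fun h ↦ hAB x h.1 h.2, by rintro rfl; simp⟩
  rw [← List.toFinset_card_of_nodup hA, ← List.toFinset_card_of_nodup hB,
    ← Finset.card_union_add_card_inter, hinter, Finset.card_singleton]

def IncDec (p q : ℝ × ℝ) : Prop := p.1 ≤ q.1 ∧ q.2 ≤ p.2

theorem IncDec.refl (p : ℝ × ℝ) : IncDec p p := ⟨le_rfl, le_rfl⟩

theorem IncDec.trans {p q s : ℝ × ℝ} (hpq : IncDec p q) (hqs : IncDec q s) : IncDec p s :=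
  ⟨hpq.1.trans hqs.1, hqs.2.trans hpq.2⟩

theorem IncDec.crosses {p q : ℝ × ℝ} (h : IncDec p q) : (p.1 - q.1) * (p.2 - q.2) ≤ 0 :=
  mul_nonpos_of_nonpos_of_nonneg (sub_nonpos.mpr h.1) (sub_nonneg.mpr h.2)

theorem crosses_of_isChain_incDec {ι : Type*} {v : ι → ℝ × ℝ} {s : Set ι}
    (hs : IsChain (InvImage IncDec v) s) :
    ∀ a ∈ s, ∀ b ∈ s, a ≠ b → ((v a).1 - (v b).1) * ((v a).2 - (v b).2) ≤ 0 := by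
  intro a ha b hb hab
  rcases hs ha hb hab with h | h
  · exact h.crosses
  · calc ((v a).1 - (v b).1) * ((v a).2 - (v b).2)
        = ((v b).1 - (v a).1) * ((v b).2 - (v a).2) := by ring
      _ ≤ 0 := h.crosses

theorem stmt0_general {n ω : ℕ} (v : Fin n → ℝ × ℝ)
    (hinj : Function.Injective (fun i => (v i).1))
    (hclique : ∀ S : Finset (Fin n),
      (∀ i ∈ S, ∀ j ∈ S, i ≠ j → ((v i).1 - (v j).1) * ((v i).2 - (v j).2) ≤ 0) →
      S.card ≤ ω)
    (i : Fin n) (A B : List (Fin n))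
    (hAhead : A.head? = some i) (hBhead : B.head? = some i)
    (hAnd : A.Nodup) (hBnd : B.Nodup)
    (hA : A.Chain' (fun a b => (v a).1 ≤ (v b).1 ∧ (v b).2 ≤ (v a).2))
    (hB : B.Chain' (fun a b => (v b).1 ≤ (v a).1 ∧ (v a).2 ≤ (v b).2)) :
    A.length + B.length ≤ ω + 1 := by
  obtain ⟨A, rfl⟩ := List.head?_eq_some_iff.mp hAhead
  obtain ⟨B, rfl⟩ := List.head?_eq_some_iff.mp hBhead
  let r : Fin n → Fin n → Prop := InvImage IncDec v
  have : IsPreorder (Fin n) r := { refl a := IncDec.refl (v a), trans _ _ _ := IncDec.trans }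
  have hAB : ∀ x ∈ i :: A, x ∈ i :: B → x = i := fun x hxA hxB ↦
    hinj (le_antisymm (hB.rel_head_of_mem (r := Function.swap r) hxB).1
      (hA.rel_head_of_mem (r := r) hxA).1)
  have hcard := hclique _ (crosses_of_isChain_incDec
    (isChain_toFinset_union_of_isChain_cons (r := r) hA hB))
  have := List.card_toFinset_union_add_one hAnd hBnd hAB
  omega

/-- For quasi-convex sets between two lines (modeled by the bottom/top
x-coordinates of their base segments, with distinct bottom coordinates), if every
pairwise-crossing subfamily has size at most ω, then for any element i and any
1-increasing-2-decreasing sequence A and 1-decreasing-2-increasing sequence B of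
previously presented elements both starting at i, the lengths satisfy
|A| + |B| ≤ ω + 1; in particular α_i + β_i ≤ ω + 1. -/
theorem stmt0 {n ω : ℕ} (v : Fin n → ℝ × ℝ)
    (hinj : Function.Injective (fun i => (v i).1))
    (hclique : ∀ S : Finset (Fin n),
      (∀ i ∈ S, ∀ j ∈ S, i ≠ j → ((v i).1 - (v j).1) * ((v i).2 - (v j).2) ≤ 0) →
      S.card ≤ ω)
    (i : Fin n) (A B : List (Fin n))
    (hAhead : A.head? = some i) (hBhead : B.head? = some i)
    (hAnd : A.Nodup) (hBnd : B.Nodup)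
    (hAle : ∀ j ∈ A, j ≤ i) (hBle : ∀ j ∈ B, j ≤ i)
    (hA : A.Chain' (fun a b => (v a).1 ≤ (v b).1 ∧ (v b).2 ≤ (v a).2))
    (hB : B.Chain' (fun a b => (v b).1 ≤ (v a).1 ∧ (v a).2 ≤ (v b).2)) :
    A.length + B.length ≤ ω + 1 :=
  stmt0_general v hinj hclique i A B hAhead hBhead hAnd hBnd hA hB
end

section
/- With elements presented in a linear order (on-line), assign to each element v the pair (α_v, β_v), where α_v is the maximum length of a sequence starting at v among already-presented elements (including v) that is nondecreasing in the first coordinate and nonincreasing in the second, and β_v symmetric. Then any two distinct elements u₁, u₂ with (α_{u₁}, β_{u₁}) = (α_{u₂}, β_{u₂}) satisfy either (u₁¹ < u₂¹ and u₁² < u₂²) or (u₁¹ > u₂¹ and u₁² > u₂²); that is, their base segments are disjoint (assuming all coordinates on each line are distinct). -/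
open Set

private lemma extend_lemma {n : ℕ} (R : Fin n → Fin n → Prop) (γ : Fin n → ℕ)
    (hγ : ∀ i : Fin n, IsGreatest {k | ∃ l : List (Fin n), l.head? = some i ∧ l.Nodup ∧
      (∀ j ∈ l, j ≤ i) ∧ l.Chain' R ∧ l.length = k} (γ i))
    (u₁ u₂ : Fin n) (hlt : u₁ < u₂) (hR : R u₂ u₁) : γ u₁ + 1 ≤ γ u₂ := by
  obtain ⟨l, hhead, hnd, hle, hch, hlen⟩ := (hγ u₁).1
  apply (hγ u₂).2
  refine ⟨u₂ :: l, rfl, ?_, ?_, ?_, by simp [hlen]⟩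
  · refine List.nodup_cons.2 ⟨fun h => ?_, hnd⟩
    exact absurd (hle _ h) (not_le.2 hlt)
  · intro j hj
    rcases List.mem_cons.1 hj with h | h
    · exact le_of_eq h
    · exact (hle j h).trans hlt.le
  · refine List.isChain_cons.2 ⟨?_, hch⟩
    intro b hb
    rw [hhead] at hb
    cases hb
    exact hR

/-- Schmerl labels. With elements presented in the order of their indices,
α i is the maximum length of a 1-increasing 2-decreasing sequence of already-presented
elements starting at i, and β i symmetrically. Any two distinct elements with equal
labels (α, β) have their base segments disjoint: strictly smaller in both coordinates
or strictly larger in both. -/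
theorem stmt1 {n : ℕ} (v : Fin n → ℝ × ℝ)
    (hinj1 : Function.Injective (fun i => (v i).1))
    (hinj2 : Function.Injective (fun i => (v i).2))
    (α β : Fin n → ℕ)
    (hα : ∀ i : Fin n, IsGreatest {k | ∃ l : List (Fin n), l.head? = some i ∧ l.Nodup ∧
      (∀ j ∈ l, j ≤ i) ∧
      l.Chain' (fun a b => (v a).1 ≤ (v b).1 ∧ (v b).2 ≤ (v a).2) ∧ l.length = k} (α i))
    (hβ : ∀ i : Fin n, IsGreatest {k | ∃ l : List (Fin n), l.head? = some i ∧ l.Nodup ∧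
      (∀ j ∈ l, j ≤ i) ∧
      l.Chain' (fun a b => (v b).1 ≤ (v a).1 ∧ (v a).2 ≤ (v b).2) ∧ l.length = k} (β i))
    (u₁ u₂ : Fin n) (hne : u₁ ≠ u₂)
    (hαeq : α u₁ = α u₂) (hβeq : β u₁ = β u₂) :
    ((v u₁).1 < (v u₂).1 ∧ (v u₁).2 < (v u₂).2) ∨
    ((v u₂).1 < (v u₁).1 ∧ (v u₂).2 < (v u₁).2) := by
  have key : ∀ a b : Fin n, a < b → α a = α b → β a = β b →
      ((v a).1 < (v b).1 ∧ (v a).2 < (v b).2) ∨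
      ((v b).1 < (v a).1 ∧ (v b).2 < (v a).2) := by
    intro a b hab hαab hβab
    have h1 : (v a).1 ≠ (v b).1 := fun h => absurd (hinj1 h) hab.ne
    have h2 : (v a).2 ≠ (v b).2 := fun h => absurd (hinj2 h) hab.ne
    rcases h1.lt_or_gt with hx | hx
    · rcases h2.lt_or_gt with hy | hy
      · exact Or.inl ⟨hx, hy⟩
      · -- v b left in 2nd coord: extend β chain of a by b
        exfalso
        have := extend_lemma (fun p q => (v q).1 ≤ (v p).1 ∧ (v p).2 ≤ (v q).2) β hβ
          a b hab ⟨hx.le, hy.le⟩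
        omega
    · rcases h2.lt_or_gt with hy | hy
      · exfalso
        have := extend_lemma (fun p q => (v p).1 ≤ (v q).1 ∧ (v q).2 ≤ (v p).2) α hα
          a b hab ⟨hx.le, hy.le⟩
        omega
      · exact Or.inr ⟨hx, hy⟩
  rcases hne.lt_or_gt with h | h
  · exact key u₁ u₂ h hαeq hβeq
  · exact (key u₂ u₁ h hαeq.symm hβeq.symm).symm
end

section
/- Schmerl's on-line chain partition: every on-line presented 2-dimensional poset of width at most ω can be partitioned on-line into at most ω(ω+1)/2 chains. Formally: there is a function assigning to each new element v (given its comparabilities to previously presented elements of a poset that is the intersection of two given linear orders) a label from a set of size ω(ω+1)/2, such that elements with equal labels are pairwise comparable, where ω bounds the width of the poset. -/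
/-!
Two incomparable points `a`, `b` (with distinct coordinates) are related one way or the other by
`LeftAbove`: `a` lies left of and above `b`. A new point `v` gets the label `(α - 1, β - 1)`, where
`α` and `β` are the lengths of the longest `LeftAbove`- and converse-`LeftAbove`-chains of
presented points ending at `v`. Gluing the first chain to the reverse of the second at `v` gives
an antichain of size `α + β - 1`, so `α + β ≤ ω + 1` and the Cantor code of the pair is below
`ω(ω+1)/2`. If incomparable `u`, `v` with `u` presented first got the same label, `u` followed by
`v` would extend one of the two chains ending at `u`, making `α` or `β` larger at `v`.
-/

open Function

namespace Schmerl

section Chains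

variable {α : Type*} {r : α → α → Prop}

lemma pairwise_append_cons [IsTrans α r] {c e : List α} {v : α}
    (h₁ : (c ++ [v]).Pairwise r) (h₂ : (v :: e).Pairwise r) : (c ++ v :: e).Pairwise r := by
  rw [List.pairwise_append] at h₁ ⊢
  have hav : ∀ a ∈ c, r a v := fun a ha => h₁.2.2 a ha v (List.mem_singleton_self v)
  refine ⟨h₁.1, h₂, fun a ha b hb => ?_⟩
  rcases List.mem_cons.1 hb with rfl | hb
  · exact hav a ha
  · exact _root_.trans (hav a ha) (List.rel_of_pairwise_cons h₂ hb)

lemma rel_or_rel_of_pairwise {d : List α} (hd : d.Pairwise r) {a b : α} (ha : a ∈ d) (hb : b ∈ d)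
    (hab : a ≠ b) : r a b ∨ r b a := by
  have : Std.Symm fun x y => r x y ∨ r y x := ⟨fun _ _ => Or.symm⟩
  have hd' : d.Pairwise fun x y => r x y ∨ r y x := hd.imp Or.inl
  exact hd'.forall ha hb hab

variable (r) in
/-- `v` itself is not counted, nor required to lie in `l`. -/
def chainLengths (l : List α) (v : α) : Set ℕ :=
  {k | ∃ c : List α, (c ++ [v]).Pairwise r ∧ c ⊆ l ∧ c.length = k}

variable (r) in
noncomputable def heightIn (l : List α) (v : α) : ℕ :=
  sSup (chainLengths r l v)

variable [Std.Irrefl r] {l l' : List α} {u v : α}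

lemma bddAbove_chainLengths : BddAbove (chainLengths r l v) := by
  refine ⟨l.length, ?_⟩
  rintro _ ⟨c, hc, hcl, rfl⟩
  exact ((List.pairwise_append.1 hc).1.nodup.subperm hcl).length_le

lemma heightIn_mem : heightIn r l v ∈ chainLengths r l v :=
  Nat.sSup_mem ⟨0, [], by simp, by simp, rfl⟩ bddAbove_chainLengths

lemma heightIn_lt_heightIn [IsTrans α r] (hu : u ∈ l) (hl : l ⊆ l') (huv : r u v) :
    heightIn r l u < heightIn r l' v := by
  obtain ⟨c, hc, hcl, hlen⟩ := heightIn_mem (r := r) (l := l) (v := u)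
  have hext : (c ++ [u] ++ [v]).Pairwise r := by
    simpa using pairwise_append_cons hc (List.pairwise_pair.2 huv)
  refine lt_of_lt_of_le ?_ (le_csSup bddAbove_chainLengths ⟨c ++ [u], hext, ?_, rfl⟩)
  · simp [hlen]
  · simpa [List.append_subset] using ⟨fun x hx => hl (hcl hx), hl hu⟩

lemma exists_pairwise_length_eq [IsTrans α r] (hv : v ∈ l) :
    ∃ d : List α, d.Pairwise r ∧ d ⊆ l ∧
      d.length = heightIn r l v + heightIn (swap r) l v + 1 := by
  obtain ⟨c₁, h₁, hc₁, len₁⟩ := heightIn_mem (r := r) (l := l) (v := v)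
  obtain ⟨c₂, h₂, hc₂, len₂⟩ := heightIn_mem (r := swap r) (l := l) (v := v)
  have h₂' : (v :: c₂.reverse).Pairwise r := by
    rw [← List.reverse_concat', List.pairwise_reverse]
    exact h₂
  refine ⟨c₁ ++ v :: c₂.reverse, pairwise_append_cons h₁ h₂', ?_, ?_⟩
  · simpa [List.append_subset, List.cons_subset] using ⟨hc₁, hv, hc₂⟩
  · simp only [List.length_append, List.length_cons, List.length_reverse, len₁, len₂]
    omega

end Chains

section PairCode

/-- Cantor's enumeration of `ℕ × ℕ` along the antidiagonals `a + b = s`, each of which starts at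
the triangular number `(s + 1).choose 2`. -/
def pairCode (a b : ℕ) : ℕ :=
  (a + b + 1).choose 2 + a

lemma pairCode_lt_choose (a b : ℕ) : pairCode a b < (a + b + 2).choose 2 := by
  have h : (a + b + 2).choose 2 = (a + b + 1).choose 1 + (a + b + 1).choose 2 :=
    Nat.choose_succ_succ' (a + b + 1) 1
  rw [pairCode, h, Nat.choose_one_right]
  omega

lemma pairCode_lt_pairCode_of_add_lt {a b a' b' : ℕ} (h : a + b < a' + b') :
    pairCode a b < pairCode a' b' :=
  calc pairCode a b < (a + b + 2).choose 2 := pairCode_lt_choose a b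
    _ ≤ (a' + b' + 1).choose 2 := Nat.choose_le_choose 2 (by omega)
    _ ≤ pairCode a' b' := Nat.le_add_right _ _

lemma pairCode_inj {a b a' b' : ℕ} : pairCode a b = pairCode a' b' ↔ a = a' ∧ b = b' := by
  refine ⟨fun h => ?_, fun ⟨rfl, rfl⟩ => rfl⟩
  have hsum : a + b = a' + b' := by
    by_contra hne
    rcases Nat.lt_or_gt_of_ne hne with hlt | hlt
    · exact (pairCode_lt_pairCode_of_add_lt hlt).ne h
    · exact (pairCode_lt_pairCode_of_add_lt hlt).ne' h
  rw [pairCode, pairCode, hsum] at h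
  omega

lemma pairCode_lt_of_add_lt {a b m : ℕ} (h : a + b < m) : pairCode a b < m * (m + 1) / 2 := by
  calc pairCode a b < (a + b + 2).choose 2 := pairCode_lt_choose a b
    _ ≤ (m + 1).choose 2 := Nat.choose_le_choose 2 (by omega)
    _ = m * (m + 1) / 2 := by rw [Nat.choose_two_right, Nat.add_sub_cancel, Nat.mul_comm]

end PairCode

section ChainLabel

variable {α : Type*} {r : α → α → Prop} [IsTrans α r] [Std.Irrefl r] {l l' : List α} {u v : α}

variable (r) in
/-- The label `(α - 1, β - 1)` of Schmerl's algorithm, where `α` and `β` are the lengths of the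
longest `r`- and `swap r`-chains in `l` ending at `v`. -/
noncomputable def chainLabel (l : List α) (v : α) : ℕ :=
  pairCode (heightIn r l v) (heightIn (swap r) l v)

lemma chainLabel_ne (hu : u ∈ l) (hl : l ⊆ l') (h : r u v ∨ r v u) :
    chainLabel r l u ≠ chainLabel r l' v := by
  rw [chainLabel, chainLabel, Ne, pairCode_inj]
  rcases h with h | h
  · exact fun heq => (heightIn_lt_heightIn hu hl h).ne heq.1
  · exact fun heq => (heightIn_lt_heightIn (r := swap r) hu hl h).ne heq.2

lemma chainLabel_lt {ω : ℕ} (hv : v ∈ l) (hω : ∀ d : List α, d.Pairwise r → d ⊆ l → d.length ≤ ω) :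
    chainLabel r l v < ω * (ω + 1) / 2 := by
  obtain ⟨d, hd, hdl, hlen⟩ := exists_pairwise_length_eq (r := r) hv
  exact pairCode_lt_of_add_lt (by have := hω d hd hdl; omega)

end ChainLabel

section Prefix

variable {β : Type*} {n : ℕ} (p : Fin n → β)

lemma getLast?_map_take_finRange (i : Fin n) :
    (((List.finRange n).take (i.1 + 1)).map p).getLast? = some (p i) := by
  rw [List.getLast?_map, List.getLast?_take]
  simp

lemma mem_map_take_finRange {i k : Fin n} (hk : k ≤ i) :
    p k ∈ ((List.finRange n).take (i.1 + 1)).map p := by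
  refine List.mem_map_of_mem ?_
  rw [List.mem_take_iff_getElem]
  exact ⟨k, by rw [List.length_finRange]; omega, by simp⟩

lemma map_take_finRange_subset {i j : Fin n} (hij : i ≤ j) :
    ((List.finRange n).take (i.1 + 1)).map p ⊆ ((List.finRange n).take (j.1 + 1)).map p :=
  List.map_subset p (List.take_subset_take_left _ (by omega))

end Prefix

section Plane

def LeftAbove (a b : ℝ × ℝ) : Prop :=
  a.1 < b.1 ∧ b.2 < a.2

instance : IsTrans (ℝ × ℝ) LeftAbove :=
  ⟨fun _ _ _ h₁ h₂ => ⟨h₁.1.trans h₂.1, h₂.2.trans h₁.2⟩⟩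

instance : Std.Irrefl LeftAbove :=
  ⟨fun _ h => h.1.false⟩

lemma not_lt_of_leftAbove {a b : ℝ × ℝ} (h : LeftAbove a b) :
    ¬(a.1 < b.1 ∧ a.2 < b.2) ∧ ¬(b.1 < a.1 ∧ b.2 < a.2) :=
  ⟨fun h' => h.2.asymm h'.2, fun h' => h.1.asymm h'.1⟩

lemma lt_or_lt_or_leftAbove_or_leftAbove {a b : ℝ × ℝ} (h₁ : a.1 ≠ b.1) (h₂ : a.2 ≠ b.2) :
    (a.1 < b.1 ∧ a.2 < b.2) ∨ (b.1 < a.1 ∧ b.2 < a.2) ∨ LeftAbove a b ∨ LeftAbove b a := by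
  unfold LeftAbove
  rcases h₁.lt_or_gt with h₁ | h₁ <;> rcases h₂.lt_or_gt with h₂ | h₂ <;> tauto

lemma length_le_of_pairwise_leftAbove {ω n : ℕ} {p : Fin n → ℝ × ℝ}
    (hinj : Injective fun i => (p i).1)
    (hwidth : ∀ S : Finset (Fin n),
      (∀ i ∈ S, ∀ j ∈ S, i ≠ j →
        ¬((p i).1 < (p j).1 ∧ (p i).2 < (p j).2) ∧
        ¬((p j).1 < (p i).1 ∧ (p j).2 < (p i).2)) → S.card ≤ ω)
    {d : List (ℝ × ℝ)} (hd : d.Pairwise LeftAbove) (hdp : ∀ x ∈ d, ∃ i, p i = x) :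
    d.length ≤ ω := by
  classical
  set S := Finset.univ.filter fun i => p i ∈ d
  have hS : ∀ i ∈ S, ∀ j ∈ S, i ≠ j →
      ¬((p i).1 < (p j).1 ∧ (p i).2 < (p j).2) ∧ ¬((p j).1 < (p i).1 ∧ (p j).2 < (p i).2) := by
    intro i hi j hj hij
    simp only [S, Finset.mem_filter, Finset.mem_univ, true_and] at hi hj
    rcases rel_or_rel_of_pairwise hd hi hj fun h => hij (hinj (congrArg Prod.fst h)) with h | h
    · exact not_lt_of_leftAbove h
    · exact (not_lt_of_leftAbove h).symm
  calc d.length = d.toFinset.card := (List.toFinset_card_of_nodup hd.nodup).symm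
    _ ≤ (S.image p).card := Finset.card_le_card fun x hx => by
        obtain ⟨i, rfl⟩ := hdp x (List.mem_toFinset.1 hx)
        exact Finset.mem_image_of_mem p (by simpa [S] using hx)
    _ ≤ S.card := Finset.card_image_le
    _ ≤ ω := hwidth S hS

/-- A list is the history of presented points, the last entry being the new one. -/
noncomputable def onlineLabel (l : List (ℝ × ℝ)) : ℕ :=
  l.getLast?.elim 0 (chainLabel LeftAbove l)

lemma onlineLabel_map_take_finRange {n : ℕ} (p : Fin n → ℝ × ℝ) (i : Fin n) :
    onlineLabel (((List.finRange n).take (i.1 + 1)).map p) =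
      chainLabel LeftAbove (((List.finRange n).take (i.1 + 1)).map p) (p i) := by
  rw [onlineLabel, getLast?_map_take_finRange]
  rfl

end Plane

end Schmerl

open Schmerl

/-- Schmerl's on-line chain partition of 2-dimensional posets.
A 2-dimensional poset is presented on-line: element i comes with its positions
(p i).1, (p i).2 in the two linear orders (injective coordinates), and x < y iff
both coordinates are smaller. There is an on-line algorithm A (the label of the
i-th element depends only on the presented prefix) using labels from a set of size
ω(ω+1)/2 on posets of width at most ω, such that equally labeled elements are
pairwise comparable. -/
theorem stmt2 :
    ∃ A : List (ℝ × ℝ) → ℕ,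
      ∀ (ω n : ℕ) (p : Fin n → ℝ × ℝ),
        Function.Injective (fun i => (p i).1) →
        Function.Injective (fun i => (p i).2) →
        (∀ S : Finset (Fin n),
          (∀ i ∈ S, ∀ j ∈ S, i ≠ j →
            ¬((p i).1 < (p j).1 ∧ (p i).2 < (p j).2) ∧
            ¬((p j).1 < (p i).1 ∧ (p j).2 < (p i).2)) → S.card ≤ ω) →
        (∀ i : Fin n, A (((List.finRange n).take (i.1 + 1)).map p) < ω * (ω + 1) / 2) ∧
        (∀ i j : Fin n, i ≠ j →
          A (((List.finRange n).take (i.1 + 1)).map p) =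
            A (((List.finRange n).take (j.1 + 1)).map p) →
          ((p i).1 < (p j).1 ∧ (p i).2 < (p j).2) ∨
          ((p j).1 < (p i).1 ∧ (p j).2 < (p i).2)) := by
  refine ⟨onlineLabel, fun ω n p hinj₁ hinj₂ hwidth => ⟨fun i => ?_, fun i j hij heq => ?_⟩⟩
  · rw [onlineLabel_map_take_finRange]
    refine chainLabel_lt (mem_map_take_finRange p le_rfl) fun d hd hdl =>
      length_le_of_pairwise_leftAbove hinj₁ hwidth hd fun x hx => ?_
    obtain ⟨k, -, hk⟩ := List.mem_map.1 (hdl hx)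
    exact ⟨k, hk⟩
  · wlog hlt : i < j generalizing i j
    · exact (this j i hij.symm heq.symm (lt_of_le_of_ne (not_lt.1 hlt) hij.symm)).symm
    rw [onlineLabel_map_take_finRange, onlineLabel_map_take_finRange] at heq
    have hne := chainLabel_ne (r := LeftAbove) (mem_map_take_finRange p le_rfl)
      (map_take_finRange_subset p hlt.le) (v := p j)
    rcases lt_or_lt_or_leftAbove_or_leftAbove (hinj₁.ne hij) (hinj₂.ne hij) with h | h | h | h
    · exact Or.inl h
    · exact Or.inr h
    · exact absurd heq (hne (Or.inl h))
    · exact absurd heq (hne (Or.inr h))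
end

section
/- Let U and V be disjoint sets of three quasi-convex sets each, spanned between two horizontal lines, such that sets within U are pairwise disjoint and sets within V are pairwise disjoint, and all six base segments are pairwise disjoint (hence linearly ordered left to right within the strip). Then some set in U is disjoint from some set in V; i.e., the intersection graph of U ∪ V is not an induced K_{3,3} with parts U, V. -/
open Set

/-- The closed strip between the two horizontal lines y = 0 and y = 1. -/
def Strip : Set (ℝ × ℝ) := {p | 0 ≤ p.2 ∧ p.2 ≤ 1}

/-- The x-coordinate at height t of the segment with bottom endpoint (a,0) and top
endpoint (b,1). -/
noncomputable def baseFun (a b t : ℝ) : ℝ := (1 - t) * a + t * b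

/-- The segment spanned between the two lines with bottom x-coordinate a and top
x-coordinate b. -/
def BaseSeg (a b : ℝ) : Set (ℝ × ℝ) := {p | ∃ t ∈ Icc (0:ℝ) 1, p = (baseFun a b t, t)}

/-- Ordering of base segments: the first lies strictly left of the second at all heights. -/
def SegLt (p q : ℝ × ℝ) : Prop :=
  ∀ t ∈ Icc (0:ℝ) 1, baseFun p.1 p.2 t < baseFun q.1 q.2 t

lemma baseFun_cont (a b : ℝ) : Continuous (fun t => baseFun a b t) := by
  unfold baseFun; fun_prop

/-- Two disjoint base segments are totally ordered. -/
lemma seg_total {p q : ℝ × ℝ}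
    (h : ∀ t ∈ Icc (0:ℝ) 1, baseFun p.1 p.2 t ≠ baseFun q.1 q.2 t) :
    SegLt p q ∨ SegLt q p := by
  by_contra hco
  simp only [SegLt] at hco
  push_neg at hco
  obtain ⟨⟨t₁, ht₁, h1⟩, ⟨t₂, ht₂, h2⟩⟩ := hco
  set g : ℝ → ℝ := fun t => baseFun q.1 q.2 t - baseFun p.1 p.2 t with hg
  have hgc : ContinuousOn g (uIcc t₁ t₂) :=
    ((baseFun_cont q.1 q.2).sub (baseFun_cont p.1 p.2)).continuousOn
  have hsub : uIcc t₁ t₂ ⊆ Icc (0:ℝ) 1 := by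
    intro x hx
    rw [Set.mem_uIcc] at hx
    rcases hx with ⟨h₁, h₂⟩ | ⟨h₁, h₂⟩
    · exact ⟨le_trans ht₁.1 h₁, le_trans h₂ ht₂.2⟩
    · exact ⟨le_trans ht₂.1 h₁, le_trans h₂ ht₁.2⟩
  have h0 : (0:ℝ) ∈ uIcc (g t₁) (g t₂) := by
    rw [Set.mem_uIcc]
    left
    constructor <;> simp only [hg] <;> linarith
  obtain ⟨t, ht, hgt⟩ := intermediate_value_uIcc hgc h0
  exact h t (hsub ht) (by simp only [hg] at hgt; linarith)

/-- If a connected subset of the strip is disjoint from a base segment and one point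
lies strictly left of the segment, then all points do. -/
lemma left_of {w : Set (ℝ × ℝ)} {a b : ℝ} (hc : IsConnected w) (hs : w ⊆ Strip)
    (hd : Disjoint w (BaseSeg a b)) {p q : ℝ × ℝ} (hp : p ∈ w) (hq : q ∈ w)
    (h : p.1 < baseFun a b p.2) : q.1 < baseFun a b q.2 := by
  set F : ℝ × ℝ → ℝ := fun r => r.1 - baseFun a b r.2 with hF
  have hFc : Continuous F := by
    simp only [hF]; unfold baseFun; fun_prop
  have hne : ∀ r ∈ w, F r ≠ 0 := by
    intro r hr h0
    have hrs := hs hr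
    have hmem : r ∈ BaseSeg a b := by
      refine ⟨r.2, ⟨hrs.1, hrs.2⟩, ?_⟩
      have : r.1 = baseFun a b r.2 := by simp only [hF] at h0; linarith
      exact Prod.ext this rfl
    exact Set.disjoint_left.mp hd hr hmem
  by_contra hlt
  push_neg at hlt
  have hq0 : 0 < F q := lt_of_le_of_ne (by simp only [hF]; linarith) (Ne.symm (hne q hq))
  have hiv := hc.isPreconnected.intermediate_value hp hq hFc.continuousOn
  have h0 : (0:ℝ) ∈ Icc (F p) (F q) := ⟨by simp only [hF]; linarith, le_of_lt hq0⟩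
  obtain ⟨r, hr, hr0⟩ := hiv h0
  exact hne r hr hr0

lemma right_of {w : Set (ℝ × ℝ)} {a b : ℝ} (hc : IsConnected w) (hs : w ⊆ Strip)
    (hd : Disjoint w (BaseSeg a b)) {p q : ℝ × ℝ} (hp : p ∈ w) (hq : q ∈ w)
    (h : baseFun a b p.2 < p.1) : baseFun a b q.2 < q.1 := by
  by_contra hlt
  push_neg at hlt
  have hne : q.1 ≠ baseFun a b q.2 := by
    intro h0
    have hqs := hs hq
    have hmem : q ∈ BaseSeg a b := ⟨q.2, ⟨hqs.1, hqs.2⟩, Prod.ext h0 rfl⟩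
    exact Set.disjoint_left.mp hd hq hmem
  have : p.1 < baseFun a b p.2 := left_of hc hs hd hq hp (lt_of_le_of_ne hlt hne)
  linarith

lemma zero_mem_Icc : (0:ℝ) ∈ Icc (0:ℝ) 1 := ⟨le_refl 0, zero_le_one⟩

/-- Three pairwise comparable segments can be sorted. -/
lemma order3 (s : Fin 3 → ℝ × ℝ)
    (h : ∀ i j : Fin 3, i ≠ j → SegLt (s i) (s j) ∨ SegLt (s j) (s i)) :
    ∃ a b c : Fin 3, a ≠ b ∧ b ≠ c ∧ a ≠ c ∧ SegLt (s a) (s b) ∧ SegLt (s b) (s c) := by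
  rcases h 0 1 (by decide) with h01 | h10 <;>
    rcases h 0 2 (by decide) with h02 | h20 <;>
    rcases h 1 2 (by decide) with h12 | h21
  · exact ⟨0, 1, 2, by decide, by decide, by decide, h01, h12⟩
  · exact ⟨0, 2, 1, by decide, by decide, by decide, h02, h21⟩
  · exfalso
    have A := h01 0 zero_mem_Icc
    have B := h12 0 zero_mem_Icc
    have C := h20 0 zero_mem_Icc
    linarith
  · exact ⟨2, 0, 1, by decide, by decide, by decide, h20, h01⟩
  · exact ⟨1, 0, 2, by decide, by decide, by decide, h10, h02⟩
  · exfalso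
    have A := h10 0 zero_mem_Icc
    have B := h02 0 zero_mem_Icc
    have C := h21 0 zero_mem_Icc
    linarith
  · exact ⟨1, 2, 0, by decide, by decide, by decide, h12, h20⟩
  · exact ⟨2, 1, 0, by decide, by decide, by decide, h21, h10⟩

/-- Core contradiction: if all sets of A meet all sets of B, and the middle base of A
is left of the middle base of B, we get a contradiction using the leftmost set of A
and the rightmost set of B. -/
lemma core (A B : Fin 3 → Set (ℝ × ℝ)) (bA bB : Fin 3 → ℝ × ℝ)
    (hA : ∀ i, IsConnected (A i) ∧ A i ⊆ Strip ∧ BaseSeg (bA i).1 (bA i).2 ⊆ A i)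
    (hB : ∀ i, IsConnected (B i) ∧ B i ⊆ Strip ∧ BaseSeg (bB i).1 (bB i).2 ⊆ B i)
    (hAdisj : ∀ i j, i ≠ j → Disjoint (A i) (A j))
    (hBdisj : ∀ i j, i ≠ j → Disjoint (B i) (B j))
    (meets : ∀ i j, ((A i) ∩ (B j)).Nonempty)
    {aL aM bM bR : Fin 3} (haLM : aL ≠ aM) (hbMR : bM ≠ bR)
    (h1 : SegLt (bA aL) (bA aM)) (h2 : SegLt (bB bM) (bB bR))
    (h3 : SegLt (bA aM) (bB bM)) : False := by
  have base0 : ∀ a b : ℝ, baseFun a b 0 = a := by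
    intro a b; unfold baseFun; ring
  -- the bottom endpoint of the base of A aL lies in A aL
  have hpA : ((bA aL).1, (0:ℝ)) ∈ A aL := by
    apply (hA aL).2.2
    exact ⟨0, zero_mem_Icc, by rw [base0]⟩
  have hpB : ((bB bR).1, (0:ℝ)) ∈ B bR := by
    apply (hB bR).2.2
    exact ⟨0, zero_mem_Icc, by rw [base0]⟩
  -- A aL lies entirely left of base(A aM)
  have hALdisj : Disjoint (A aL) (BaseSeg (bA aM).1 (bA aM).2) :=
    (hAdisj aL aM haLM).mono_right (hA aM).2.2
  have hpAlt : ((bA aL).1, (0:ℝ)).1 < baseFun (bA aM).1 (bA aM).2 ((bA aL).1, (0:ℝ)).2 := by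
    simpa [base0] using h1 0 zero_mem_Icc
  have hleft : ∀ q ∈ A aL, q.1 < baseFun (bA aM).1 (bA aM).2 q.2 :=
    fun q hq => left_of (hA aL).1 (hA aL).2.1 hALdisj hpA hq hpAlt
  -- B bR lies entirely right of base(B bM)
  have hBRdisj : Disjoint (B bR) (BaseSeg (bB bM).1 (bB bM).2) :=
    (hBdisj bR bM hbMR.symm).mono_right (hB bM).2.2
  have hpBgt : baseFun (bB bM).1 (bB bM).2 ((bB bR).1, (0:ℝ)).2 < ((bB bR).1, (0:ℝ)).1 := by
    simpa [base0] using h2 0 zero_mem_Icc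
  have hright : ∀ q ∈ B bR, baseFun (bB bM).1 (bB bM).2 q.2 < q.1 :=
    fun q hq => right_of (hB bR).1 (hB bR).2.1 hBRdisj hpB hq hpBgt
  -- contradiction at a point of A aL ∩ B bR
  obtain ⟨q, hqA, hqB⟩ := meets aL bR
  have hq2 : q.2 ∈ Icc (0:ℝ) 1 := ⟨((hA aL).2.1 hqA).1, ((hA aL).2.1 hqA).2⟩
  have l1 := hleft q hqA
  have l2 := h3 q.2 hq2
  have l3 := hright q hqB
  linarith

/-- Let U and V be disjoint triples of quasi-convex sets spanned between
two lines (connected subsets of the strip, each containing a base segment spanning the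
strip), such that the sets within U are pairwise disjoint, the sets within V are
pairwise disjoint, and all six base segments are pairwise disjoint. Then some set of U
is disjoint from some set of V, i.e. the intersection graph is not an induced K₃,₃
with parts U, V. -/
theorem stmt3 (U V : Fin 3 → Set (ℝ × ℝ)) (bU bV : Fin 3 → ℝ × ℝ)
    (hU : ∀ i, IsConnected (U i) ∧ U i ⊆ Strip ∧ BaseSeg (bU i).1 (bU i).2 ⊆ U i)
    (hV : ∀ i, IsConnected (V i) ∧ V i ⊆ Strip ∧ BaseSeg (bV i).1 (bV i).2 ⊆ V i)
    (hUdisj : ∀ i j, i ≠ j → Disjoint (U i) (U j))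
    (hVdisj : ∀ i j, i ≠ j → Disjoint (V i) (V j))
    (hbUU : ∀ i j, i ≠ j → ∀ t ∈ Icc (0:ℝ) 1,
      baseFun (bU i).1 (bU i).2 t ≠ baseFun (bU j).1 (bU j).2 t)
    (hbVV : ∀ i j, i ≠ j → ∀ t ∈ Icc (0:ℝ) 1,
      baseFun (bV i).1 (bV i).2 t ≠ baseFun (bV j).1 (bV j).2 t)
    (hbUV : ∀ i j, ∀ t ∈ Icc (0:ℝ) 1,
      baseFun (bU i).1 (bU i).2 t ≠ baseFun (bV j).1 (bV j).2 t) :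
    ∃ i j, Disjoint (U i) (V j) := by
  by_contra hcon
  push_neg at hcon
  have meets : ∀ i j, ((U i) ∩ (V j)).Nonempty :=
    fun i j => Set.not_disjoint_iff_nonempty_inter.mp (hcon i j)
  obtain ⟨uL, uM, uR, huLM, huMR, _, hu1, hu2⟩ :=
    order3 bU (fun i j hij => seg_total (hbUU i j hij))
  obtain ⟨vL, vM, vR, hvLM, hvMR, _, hv1, hv2⟩ :=
    order3 bV (fun i j hij => seg_total (hbVV i j hij))
  rcases seg_total (hbUV uM vM) with h | h
  · exact core U V bU bV hU hV hUdisj hVdisj meets huLM hvMR hu1 hv2 h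
  · exact core V U bV bU hV hU hVdisj hUdisj
      (fun i j => by rw [Set.inter_comm]; exact meets j i) hvLM huMR hv1 hu2 h
end

section
/- Let x, y, z be three points in the open horizontal strip between two parallel horizontal lines, with pairwise distinct y-coordinates. For a segment s spanned between the two lines (one endpoint on each line) avoiding x, y, z, define its type as the subset of {x, y, z} consisting of the points lying strictly to the left of s. Then at most 7 of the 8 subsets of {x, y, z} are realizable as types: if p is the point with the middle y-coordinate, then the types {p} and {x,y,z} \ {p} are not both realizable. -/
open Set

/-- The x-coordinate at height t of the segment spanned between the lines y = 0 and
y = 1 with bottom x-coordinate p and top x-coordinate q. -/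
noncomputable def segAt (p q t : ℝ) : ℝ := (1 - t) * p + t * q

/-- Let x, y, z be points of the open strip with x.2 < y.2 < z.2 (so y is
the point with the middle height). For a spanned segment avoiding the three points, its
type is the set of those points strictly to its left. Then the types {y} and {x,z} are
not both realizable; hence at most 7 of the 8 subsets occur as types. -/
theorem stmt4 (x y z : ℝ × ℝ)
    (hx : x.2 ∈ Ioo (0:ℝ) 1) (hy : y.2 ∈ Ioo (0:ℝ) 1) (hz : z.2 ∈ Ioo (0:ℝ) 1)
    (hxy : x.2 < y.2) (hyz : y.2 < z.2) :
    ¬ ((∃ p q : ℝ, (∀ w ∈ ({x, y, z} : Set (ℝ × ℝ)), w.1 ≠ segAt p q w.2) ∧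
          y.1 < segAt p q y.2 ∧ ¬ x.1 < segAt p q x.2 ∧ ¬ z.1 < segAt p q z.2) ∧
       (∃ p q : ℝ, (∀ w ∈ ({x, y, z} : Set (ℝ × ℝ)), w.1 ≠ segAt p q w.2) ∧
          x.1 < segAt p q x.2 ∧ z.1 < segAt p q z.2 ∧ ¬ y.1 < segAt p q y.2)) := by
  rintro ⟨⟨p₁, q₁, -, hy1, hx1, hz1⟩, ⟨p₂, q₂, -, hx2, hz2, hy2⟩⟩
  push_neg at hx1 hz1 hy2
  simp only [segAt] at *
  nlinarith [mul_lt_mul_of_pos_left (hx1.trans_lt hx2) (sub_pos.2 hyz),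
             mul_lt_mul_of_pos_left (hz1.trans_lt hz2) (sub_pos.2 hxy),
             mul_lt_mul_of_pos_left (hy2.trans_lt hy1) (sub_pos.2 (hxy.trans hyz))]
end

section
/- Every poset of height 2 is convex: if P is a finite poset in which every chain has at most 2 elements, then there is a family of compact convex sets, each spanned between two fixed horizontal lines (intersecting both lines), in bijection with the elements of P, such that two sets intersect if and only if the corresponding elements are incomparable in P, and when the sets of x and y are disjoint, x < y in P iff the set of x lies entirely left of the set of y. -/
open Set

/-!
Maximal elements are drawn as tangent lines `x = c² - 2cy` of the parabola `x = -y²` at pairwise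
distinct heights `c ∈ [0, 1]`; any two of them cross inside the strip. The parabola lies strictly
left of every tangent except at the tangency point `(-c², c)`, and so do the far-left points
`(-2, 0)` and `(-2, 1)`. A minimal element `x` is drawn as the convex hull of these two points and
the tangency points of the maximal elements not above `x`: it touches exactly those tangents and
lies strictly left of the tangents of the elements above `x`.
-/

namespace HeightTwoConvex

open Function

theorem convex_strip : Convex ℝ Strip :=
  (convex_Icc (0 : ℝ) 1).linear_preimage (LinearMap.snd ℝ ℝ ℝ)

def tangentForm (c : ℝ) : ℝ × ℝ →ₗ[ℝ] ℝ := LinearMap.fst ℝ ℝ ℝ + (2 * c) • LinearMap.snd ℝ ℝ ℝ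

@[simp]
theorem tangentForm_apply (c : ℝ) (p : ℝ × ℝ) : tangentForm c p = p.1 + 2 * c * p.2 := rfl

def tangentSeg (c : ℝ) : Set (ℝ × ℝ) := {p | tangentForm c p = c ^ 2} ∩ Strip

def leftOfTangent (c : ℝ) : Set (ℝ × ℝ) := {p | tangentForm c p < c ^ 2}

def tangencyPoint (c : ℝ) : ℝ × ℝ := (-c ^ 2, c)

theorem tangentSeg_eq_image (c : ℝ) :
    tangentSeg c = (fun y : ℝ => (c ^ 2 - 2 * c * y, y)) '' Icc 0 1 := by
  ext ⟨x, y⟩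
  simp only [tangentSeg, Strip, mem_inter_iff, mem_ofPred_eq, tangentForm_apply, mem_image,
    mem_Icc, Prod.mk.injEq]
  constructor
  · rintro ⟨hline, hy⟩
    exact ⟨y, hy, by linarith, rfl⟩
  · rintro ⟨y, hy, rfl, rfl⟩
    exact ⟨by ring, hy⟩

theorem isCompact_tangentSeg (c : ℝ) : IsCompact (tangentSeg c) := by
  rw [tangentSeg_eq_image]
  exact isCompact_Icc.image (by fun_prop)

theorem convex_tangentSeg (c : ℝ) : Convex ℝ (tangentSeg c) :=
  (convex_hyperplane (tangentForm c).isLinear _).inter convex_strip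

theorem tangentSeg_subset_strip (c : ℝ) : tangentSeg c ⊆ Strip := inter_subset_right

theorem mem_tangentSeg_of_snd {c y : ℝ} (hy : y ∈ Icc 0 1) :
    (c ^ 2 - 2 * c * y, y) ∈ tangentSeg c := by
  rw [tangentSeg_eq_image]
  exact mem_image_of_mem _ hy

theorem tangencyPoint_mem_tangentSeg {c : ℝ} (hc : c ∈ Icc 0 1) :
    tangencyPoint c ∈ tangentSeg c := by
  rw [show tangencyPoint c = (c ^ 2 - 2 * c * c, c) from Prod.ext (by simp only [tangencyPoint]; ring) rfl]
  exact mem_tangentSeg_of_snd hc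

theorem tangentSeg_inter_nonempty {a b : ℝ} (ha : a ∈ Icc 0 1) (hb : b ∈ Icc 0 1) :
    (tangentSeg a ∩ tangentSeg b).Nonempty := by
  have hmid : (a + b) / 2 ∈ Icc (0 : ℝ) 1 := ⟨by linarith [ha.1, hb.1], by linarith [ha.2, hb.2]⟩
  refine ⟨(-a * b, (a + b) / 2), ?_, ?_⟩
  · convert mem_tangentSeg_of_snd (c := a) hmid using 2
    ring
  · convert mem_tangentSeg_of_snd (c := b) hmid using 2
    ring

theorem convex_leftOfTangent (c : ℝ) : Convex ℝ (leftOfTangent c) :=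
  convex_halfSpace_lt (tangentForm c).isLinear _

theorem tangencyPoint_mem_leftOfTangent {b c : ℝ} (h : b ≠ c) :
    tangencyPoint b ∈ leftOfTangent c := by
  have : 0 < (b - c) ^ 2 := by positivity [sub_ne_zero.2 h]
  simp only [leftOfTangent, tangencyPoint, mem_ofPred_eq, tangentForm_apply]
  linarith

theorem farLeft_zero_mem_leftOfTangent (c : ℝ) : ((-2, 0) : ℝ × ℝ) ∈ leftOfTangent c := by
  simp only [leftOfTangent, mem_ofPred_eq, tangentForm_apply]
  nlinarith [sq_nonneg c]

theorem farLeft_one_mem_leftOfTangent (c : ℝ) : ((-2, 1) : ℝ × ℝ) ∈ leftOfTangent c := by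
  simp only [leftOfTangent, mem_ofPred_eq, tangentForm_apply]
  nlinarith [sq_nonneg (c - 1)]

theorem fst_lt_of_mem_leftOfTangent {c : ℝ} {p q : ℝ × ℝ} (hp : p ∈ leftOfTangent c)
    (hq : q ∈ tangentSeg c) (hpq : p.2 = q.2) : p.1 < q.1 := by
  simp only [leftOfTangent, tangentSeg, mem_inter_iff, mem_ofPred_eq, tangentForm_apply] at hp hq
  rw [hpq] at hp
  linarith [hq.1]

theorem exists_injective_Icc (P : Type*) [Finite P] :
    ∃ t : P → ℝ, Injective t ∧ ∀ x, t x ∈ Icc 0 1 := by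
  let e : ℕ ↪ Icc (0 : ℝ) 1 := (Icc_infinite zero_lt_one).natEmbedding _
  refine ⟨fun x => e (Finite.equivFin P x), ?_, fun x => (e _).2⟩
  exact Subtype.val_injective.comp (e.injective.comp (Fin.val_injective.comp (Equiv.injective _)))

section Representation

variable {P : Type*} [PartialOrder P] (t : P → ℝ)

def hullGenerators (x : P) : Set (ℝ × ℝ) :=
  {(-2, 0), (-2, 1)} ∪ (tangencyPoint ∘ t) '' {m | ¬IsMin m ∧ ¬x < m}

open Classical in
noncomputable def rep (x : P) : Set (ℝ × ℝ) :=
  if IsMin x then convexHull ℝ (hullGenerators t x) else tangentSeg (t x)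

variable {t}

theorem rep_of_isMin {x : P} (hx : IsMin x) : rep t x = convexHull ℝ (hullGenerators t x) :=
  if_pos hx

theorem rep_of_not_isMin {x : P} (hx : ¬IsMin x) : rep t x = tangentSeg (t x) :=
  if_neg hx

theorem rep_spec [Finite P] (ht : ∀ x, t x ∈ Icc 0 1) (x : P) :
    IsCompact (rep t x) ∧ Convex ℝ (rep t x) ∧ rep t x ⊆ Strip ∧
      (∃ p ∈ rep t x, p.2 = 0) ∧ (∃ p ∈ rep t x, p.2 = 1) := by
  by_cases hx : IsMin x
  · have hfin : (hullGenerators t x).Finite :=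
      (toFinite _).union ((toFinite _).image _)
    have hstrip : hullGenerators t x ⊆ Strip := by
      rintro p ((rfl | rfl) | ⟨m, -, rfl⟩)
      · exact ⟨le_rfl, zero_le_one⟩
      · exact ⟨zero_le_one, le_rfl⟩
      · exact ht m
    rw [rep_of_isMin hx]
    exact ⟨hfin.isCompact_convexHull ℝ, convex_convexHull ℝ _,
      convexHull_min hstrip convex_strip,
      ⟨_, subset_convexHull ℝ _ (Or.inl (Or.inl rfl)), rfl⟩,
      ⟨_, subset_convexHull ℝ _ (Or.inl (Or.inr rfl)), rfl⟩⟩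
  · rw [rep_of_not_isMin hx]
    exact ⟨isCompact_tangentSeg _, convex_tangentSeg _, tangentSeg_subset_strip _,
      ⟨_, mem_tangentSeg_of_snd (c := t x) ⟨le_rfl, zero_le_one⟩, rfl⟩,
      ⟨_, mem_tangentSeg_of_snd (c := t x) ⟨zero_le_one, le_rfl⟩, rfl⟩⟩

theorem rep_subset_leftOfTangent (ht : Injective t) {x m : P} (hx : IsMin x) (hxm : x < m) :
    rep t x ⊆ leftOfTangent (t m) := by
  rw [rep_of_isMin hx]
  refine convexHull_min ?_ (convex_leftOfTangent _)
  rintro p ((rfl | rfl) | ⟨j, ⟨-, hjx⟩, rfl⟩)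
  · exact farLeft_zero_mem_leftOfTangent _
  · exact farLeft_one_mem_leftOfTangent _
  · exact tangencyPoint_mem_leftOfTangent (ht.ne (by rintro rfl; exact hjx hxm))

theorem rep_left_of_lt (ht : Injective t) {x y : P} (hx : IsMin x) (hxy : x < y) :
    Disjoint (rep t x) (rep t y) ∧ ∀ p ∈ rep t x, ∀ q ∈ rep t y, p.2 = q.2 → p.1 < q.1 := by
  have hleft : ∀ p ∈ rep t x, ∀ q ∈ rep t y, p.2 = q.2 → p.1 < q.1 := by
    intro p hp q hq
    rw [rep_of_not_isMin (not_isMin_of_lt hxy)] at hq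
    exact fst_lt_of_mem_leftOfTangent (rep_subset_leftOfTangent ht hx hxy hp) hq
  exact ⟨disjoint_left.2 fun p hpx hpy => (hleft p hpx p hpy rfl).false, hleft⟩

theorem tangencyPoint_mem_rep {x m : P} (hx : IsMin x) (hm : ¬IsMin m) (hxm : ¬x < m) :
    tangencyPoint (t m) ∈ rep t x := by
  rw [rep_of_isMin hx]
  exact subset_convexHull ℝ _ (Or.inr ⟨m, ⟨hm, hxm⟩, rfl⟩)

theorem rep_inter_nonempty (ht : ∀ x, t x ∈ Icc 0 1) {x y : P} (hxy : ¬x < y) (hyx : ¬y < x) :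
    (rep t x ∩ rep t y).Nonempty := by
  by_cases hx : IsMin x <;> by_cases hy : IsMin y
  · refine ⟨(-2, 0), ?_, ?_⟩ <;> rw [rep_of_isMin ‹_›] <;>
      exact subset_convexHull ℝ _ (Or.inl (Or.inl rfl))
  · refine ⟨tangencyPoint (t y), tangencyPoint_mem_rep hx hy hxy, ?_⟩
    rw [rep_of_not_isMin hy]
    exact tangencyPoint_mem_tangentSeg (ht y)
  · refine ⟨tangencyPoint (t x), ?_, tangencyPoint_mem_rep hy hx hyx⟩
    rw [rep_of_not_isMin hx]
    exact tangencyPoint_mem_tangentSeg (ht x)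
  · rw [rep_of_not_isMin hx, rep_of_not_isMin hy]
    exact tangentSeg_inter_nonempty (ht x) (ht y)

end Representation

end HeightTwoConvex

open HeightTwoConvex in
/-- Every poset of height 2 (no chain with 3 elements) is convex: there
is a family of compact convex sets, each spanned between the two lines, in bijection
with the elements, such that two sets intersect iff the corresponding elements are
incomparable, and for comparable elements x < y the set of x lies entirely to the left
of the set of y. -/
theorem stmt5 {P : Type*} [Fintype P] [PartialOrder P]
    (hheight : ∀ a b c : P, a < b → b < c → False) :
    ∃ C : P → Set (ℝ × ℝ),
      (∀ x, IsCompact (C x) ∧ Convex ℝ (C x) ∧ C x ⊆ Strip ∧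
        (∃ p ∈ C x, p.2 = (0:ℝ)) ∧ (∃ p ∈ C x, p.2 = (1:ℝ))) ∧
      (∀ x y : P, x ≠ y → ((C x ∩ C y).Nonempty ↔ ¬ x < y ∧ ¬ y < x)) ∧
      (∀ x y : P, x < y → Disjoint (C x) (C y) ∧
        ∀ p ∈ C x, ∀ q ∈ C y, p.2 = q.2 → p.1 < q.1) := by
  obtain ⟨t, ht_inj, ht_mem⟩ := exists_injective_Icc P
  have hmin : ∀ x y : P, x < y → IsMin x := fun x y hxy =>
    isMin_iff_forall_not_lt.2 fun z hzx => hheight z x y hzx hxy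
  have hleft : ∀ x y : P, x < y → Disjoint (rep t x) (rep t y) ∧
      ∀ p ∈ rep t x, ∀ q ∈ rep t y, p.2 = q.2 → p.1 < q.1 := fun x y hxy =>
    rep_left_of_lt ht_inj (hmin x y hxy) hxy
  refine ⟨rep t, rep_spec ht_mem, fun x y _ => ⟨?_, ?_⟩, hleft⟩
  · rintro ⟨p, hpx, hpy⟩
    exact ⟨fun hxy => disjoint_left.1 (hleft x y hxy).1 hpx hpy,
      fun hyx => disjoint_left.1 (hleft y x hyx).1 hpy hpx⟩
  · exact fun ⟨hxy, hyx⟩ => rep_inter_nonempty ht_mem hxy hyx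
end

section
/- There exists a finite poset of height 3 and order dimension 3 that is not quasi-convex: for the specific 12-element poset Q with minimal elements a,b,c, middle elements d,e,f,g,h,i, and maximal elements j,k,ℓ (with a<j, b<k, c<ℓ and the six middle elements each incomparable to appropriate pairs so that in any representation the base segments of d,e,f,g,h,i would need six pairwise distinct types from {x,y,z} other than ∅ and {x,y,z}), no family of quasi-convex sets spanned between two lines represents Q. -/
open Set

/-- A quasi-convex set spanned between the two lines: a compact connected subset of
the strip containing a base segment spanning the strip. -/
def QuasiConvexSet (K : Set (ℝ × ℝ)) : Prop :=
  IsCompact K ∧ IsConnected K ∧ K ⊆ Strip ∧ ∃ a b : ℝ, BaseSeg a b ⊆ K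

/-- X lies in the left connected component of the strip minus Y: some point p of the
strip strictly left of all of Y has X contained in the connected component of
Strip \ Y containing p. -/
def LeftOf (X Y : Set (ℝ × ℝ)) : Prop :=
  ∃ p : ℝ × ℝ, p ∈ Strip ∧ (∀ q ∈ Y, p.1 < q.1) ∧
    X ⊆ connectedComponentIn (Strip \ Y) p

/-- A family C of sets between two lines represents the strict order `lt`: two distinct
sets intersect iff the corresponding elements are incomparable, and for lt i j the set
of i is disjoint from and to the left of the set of j. -/
def RepBTL {ι : Type*} (lt : ι → ι → Prop) (C : ι → Set (ℝ × ℝ)) : Prop :=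
  (∀ i j : ι, i ≠ j → ((C i ∩ C j).Nonempty ↔ ¬ lt i j ∧ ¬ lt j i)) ∧
  (∀ i j : ι, lt i j → Disjoint (C i) (C j) ∧ LeftOf (C i) (C j))

/-- A strict order is quasi-convex if it is represented by quasi-convex sets spanned
between two lines. -/
def QuasiConvexPoset {ι : Type*} (lt : ι → ι → Prop) : Prop :=
  ∃ C : ι → Set (ℝ × ℝ), (∀ i, QuasiConvexSet (C i)) ∧ RepBTL lt C

/-! ### The combinatorial poset -/

def myPairs : List (ℕ × ℕ) :=
  [(0,3),(0,6),(0,7),(0,10),(0,11),(1,4),(1,6),(1,8),(1,9),(1,11),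
   (2,5),(2,7),(2,8),(2,9),(2,10),(3,10),(3,11),(4,9),(4,11),(5,9),(5,10),
   (6,11),(7,10),(8,9)]

def myLt (i j : Fin 12) : Prop := (i.val, j.val) ∈ myPairs

instance : DecidableRel myLt := fun i j => by unfold myLt; infer_instance

def rk1 : Fin 12 → ℕ := fun i => [6,0,2,9,1,4,8,7,3,5,10,11].getD i.val 0
def rk2 : Fin 12 → ℕ := fun i => [0,2,6,1,3,8,4,7,10,11,9,5].getD i.val 0
def rk3 : Fin 12 → ℕ := fun i => [0,6,2,1,9,3,7,4,8,11,5,10].getD i.val 0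

def R1 (u v : Fin 12) : Prop := rk1 u < rk1 v
def R2 (u v : Fin 12) : Prop := rk2 u < rk2 v
def R3 (u v : Fin 12) : Prop := rk3 u < rk3 v

instance : DecidableRel R1 := fun i j => by unfold R1; infer_instance
instance : DecidableRel R2 := fun i j => by unfold R2; infer_instance
instance : DecidableRel R3 := fun i j => by unfold R3; infer_instance

def lvl : Fin 12 → ℕ := fun i => [0,0,0,1,1,1,1,1,1,2,2,2].getD i.val 0

lemma lvl_mono : ∀ a b, myLt a b → lvl a < lvl b := by decide

/-! ### Geometry lemmas -/

noncomputable def gfun (a b : ℝ) (p : ℝ × ℝ) : ℝ := p.1 - baseFun a b p.2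

lemma gfun_cont (a b : ℝ) : Continuous (gfun a b) := by
  unfold gfun baseFun; fun_prop

lemma mem_baseSeg_iff {a b : ℝ} {p : ℝ × ℝ} (hp : p ∈ Strip) :
    p ∈ BaseSeg a b ↔ gfun a b p = 0 := by
  constructor
  · rintro ⟨t, ht, rfl⟩; simp [gfun]
  · intro h
    exact ⟨p.2, ⟨hp.1, hp.2⟩, by
      have : p.1 = baseFun a b p.2 := by unfold gfun at h; linarith
      exact Prod.ext this rfl⟩

lemma sgnNeg {a b : ℝ} {K : Set (ℝ × ℝ)} (hK : IsPreconnected K) (hKS : K ⊆ Strip)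
    (hdisj : ∀ p ∈ K, p ∉ BaseSeg a b) {q : ℝ × ℝ} (hq : q ∈ K)
    (hneg : gfun a b q < 0) : ∀ p ∈ K, gfun a b p < 0 := by
  intro p hp
  by_contra h
  push_neg at h
  have h0 : (0:ℝ) ∈ Icc (gfun a b q) (gfun a b p) := ⟨le_of_lt hneg, h⟩
  obtain ⟨r, hrK, hr0⟩ := hK.intermediate_value hq hp ((gfun_cont a b).continuousOn) h0
  exact hdisj r hrK ((mem_baseSeg_iff (hKS hrK)).mpr hr0)

lemma sgnPos {a b : ℝ} {K : Set (ℝ × ℝ)} (hK : IsPreconnected K) (hKS : K ⊆ Strip)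
    (hdisj : ∀ p ∈ K, p ∉ BaseSeg a b) {q : ℝ × ℝ} (hq : q ∈ K)
    (hpos : 0 < gfun a b q) : ∀ p ∈ K, 0 < gfun a b p := by
  intro p hp
  by_contra h
  push_neg at h
  have h0 : (0:ℝ) ∈ Icc (gfun a b p) (gfun a b q) := ⟨h, le_of_lt hpos⟩
  obtain ⟨r, hrK, hr0⟩ := hK.intermediate_value hp hq ((gfun_cont a b).continuousOn) h0
  exact hdisj r hrK ((mem_baseSeg_iff (hKS hrK)).mpr hr0)

lemma leftOf_neg {X Y : Set (ℝ × ℝ)} {a b : ℝ} (hseg : BaseSeg a b ⊆ Y)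
    (hL : LeftOf X Y) : ∀ x ∈ X, gfun a b x < 0 := by
  obtain ⟨p, hpS, hpl, hsub⟩ := hL
  have hpY : p ∉ Y := fun h => lt_irrefl p.1 (hpl p h)
  have hpF : p ∈ Strip \ Y := ⟨hpS, hpY⟩
  set comp := connectedComponentIn (Strip \ Y) p with hcompdef
  have hconn : IsConnected comp := isConnected_connectedComponentIn_iff.mpr hpF
  have hcsub : comp ⊆ Strip \ Y := connectedComponentIn_subset _ _
  have hcS : comp ⊆ Strip := fun r hr => (hcsub hr).1
  have hdisj : ∀ r ∈ comp, r ∉ BaseSeg a b := fun r hr hrB => (hcsub hr).2 (hseg hrB)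
  have hq0 : (baseFun a b p.2, p.2) ∈ BaseSeg a b := ⟨p.2, ⟨hpS.1, hpS.2⟩, rfl⟩
  have hpneg : gfun a b p < 0 := by
    have := hpl _ (hseg hq0)
    unfold gfun; simpa using this
  have hpc : p ∈ comp := mem_connectedComponentIn hpF
  exact fun x hx => sgnNeg hconn.isPreconnected hcS hdisj hpc hpneg x (hsub hx)

lemma sep_pos {Cm Cv : Set (ℝ × ℝ)} {am bm av bv : ℝ}
    (hm : BaseSeg am bm ⊆ Cm) (hv : BaseSeg av bv ⊆ Cv)
    (hvS : Cv ⊆ Strip) (hvconn : IsPreconnected Cv)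
    (hdisj : Disjoint Cm Cv) (hL : LeftOf Cm Cv) :
    ∀ x ∈ Cv, 0 < gfun am bm x := by
  have hneg : ∀ y ∈ Cm, gfun av bv y < 0 := leftOf_neg hv hL
  have ham : (am, (0:ℝ)) ∈ BaseSeg am bm :=
    ⟨0, ⟨le_refl 0, zero_le_one⟩, by simp [baseFun]⟩
  have hav : (av, (0:ℝ)) ∈ BaseSeg av bv :=
    ⟨0, ⟨le_refl 0, zero_le_one⟩, by simp [baseFun]⟩
  have h1 : gfun av bv (am, 0) < 0 := hneg _ (hm ham)
  have h2 : 0 < gfun am bm (av, 0) := by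
    unfold gfun baseFun at h1 ⊢; simp at h1 ⊢; linarith
  have hdisj' : ∀ p ∈ Cv, p ∉ BaseSeg am bm := fun p hp hpB =>
    (disjoint_left.mp hdisj (hm hpB)) hp
  exact fun x hx => sgnPos hvconn hvS hdisj' (hv hav) h2 x hx

/-! ### Arithmetic pigeonhole -/

lemma termNN (l e : ℝ) (hp : 0 < l → 0 < e) (hn : l < 0 → e < 0) : 0 ≤ l * e := by
  rcases lt_trichotomy l 0 with h|h|h
  · have := hn h; nlinarith
  · simp [h]
  · exact le_of_lt (mul_pos h (hp h))

lemma termP (l e : ℝ) (hl : l ≠ 0) (hp : 0 < l → 0 < e) (hn : l < 0 → e < 0) :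
    0 < l * e := by
  rcases hl.lt_or_gt with h|h
  · exact mul_pos_of_neg_of_neg h (hn h)
  · exact mul_pos h (hp h)

lemma threeSum (l1 l2 l3 e1 e2 e3 : ℝ)
    (h1p : 0 < l1 → 0 < e1) (h1n : l1 < 0 → e1 < 0)
    (h2p : 0 < l2 → 0 < e2) (h2n : l2 < 0 → e2 < 0)
    (h3p : 0 < l3 → 0 < e3) (h3n : l3 < 0 → e3 < 0)
    (hl3 : l3 ≠ 0) : 0 < l1*e1 + l2*e2 + l3*e3 := by
  have A := termNN l1 e1 h1p h1n
  have B := termNN l2 e2 h2p h2n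
  have D := termP l3 e3 hl3 h3p h3n
  linarith

lemma keyArith (t1 t2 t3 c1 c2 c3 : ℝ)
    (H : ∀ s1 s2 s3 : Bool, ∃ α β : ℝ,
      ((s1 = true → 0 < (1-t1)*α + t1*β - c1) ∧ (s1 = false → (1-t1)*α + t1*β - c1 < 0)) ∧
      ((s2 = true → 0 < (1-t2)*α + t2*β - c2) ∧ (s2 = false → (1-t2)*α + t2*β - c2 < 0)) ∧
      ((s3 = true → 0 < (1-t3)*α + t3*β - c3) ∧ (s3 = false → (1-t3)*α + t3*β - c3 < 0))) :
    False := by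
  by_cases h12 : t1 = t2
  · subst h12
    obtain ⟨α, β, hA, hB, -⟩ := H true false true
    obtain ⟨α', β', hA', hB', -⟩ := H false true true
    have e1 := hA.1 rfl
    have e2 := hB.2 rfl
    have e1' := hA'.2 rfl
    have e2' := hB'.1 rfl
    linarith
  · have hl3 : t2 - t1 ≠ 0 := sub_ne_zero.mpr (Ne.symm h12)
    obtain ⟨α, β, hA, hB, hC⟩ :=
      H (decide (0 < t3 - t2)) (decide (0 < t1 - t3)) (decide (0 < t2 - t1))
    obtain ⟨α', β', hA', hB', hC'⟩ :=
      H (decide (t3 - t2 < 0)) (decide (t1 - t3 < 0)) (decide (t2 - t1 < 0))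
    have P1 : 0 < (t3-t2)*((1-t1)*α + t1*β - c1) + (t1-t3)*((1-t2)*α + t2*β - c2)
        + (t2-t1)*((1-t3)*α + t3*β - c3) :=
      threeSum _ _ _ _ _ _
        (fun h => hA.1 (decide_eq_true h)) (fun h => hA.2 (decide_eq_false (asymm h)))
        (fun h => hB.1 (decide_eq_true h)) (fun h => hB.2 (decide_eq_false (asymm h)))
        (fun h => hC.1 (decide_eq_true h)) (fun h => hC.2 (decide_eq_false (asymm h)))
        hl3
    have P2 : 0 < (-(t3-t2))*((1-t1)*α' + t1*β' - c1) + (-(t1-t3))*((1-t2)*α' + t2*β' - c2)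
        + (-(t2-t1))*((1-t3)*α' + t3*β' - c3) :=
      threeSum _ _ _ _ _ _
        (fun h => hA'.1 (decide_eq_true (neg_pos.mp h)))
        (fun h => hA'.2 (decide_eq_false (asymm (neg_lt_zero.mp h))))
        (fun h => hB'.1 (decide_eq_true (neg_pos.mp h)))
        (fun h => hB'.2 (decide_eq_false (asymm (neg_lt_zero.mp h))))
        (fun h => hC'.1 (decide_eq_true (neg_pos.mp h)))
        (fun h => hC'.2 (decide_eq_false (asymm (neg_lt_zero.mp h))))
        (neg_ne_zero.mpr hl3)
    have I1 : (t3-t2)*((1-t1)*α + t1*β - c1) + (t1-t3)*((1-t2)*α + t2*β - c2)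
        + (t2-t1)*((1-t3)*α + t3*β - c3)
        = -((t3-t2)*c1 + (t1-t3)*c2 + (t2-t1)*c3) := by ring
    have I2 : (-(t3-t2))*((1-t1)*α' + t1*β' - c1) + (-(t1-t3))*((1-t2)*α' + t2*β' - c2)
        + (-(t2-t1))*((1-t3)*α' + t3*β' - c3)
        = ((t3-t2)*c1 + (t1-t3)*c2 + (t2-t1)*c3) := by ring
    linarith

/-! ### myLt is not quasi-convex -/

lemma conv_e (α β : ℝ) (x : ℝ × ℝ) :
    (1 - x.2)*α + x.2*β - x.1 = -(gfun α β x) := by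
  unfold gfun baseFun; ring

lemma not_qc : ¬ QuasiConvexPoset myLt := by
  rintro ⟨C, hQC, hrep⟩
  obtain ⟨x0, hx0a, hx0j⟩ :=
    (hrep.1 0 9 (by decide)).mpr ⟨by decide, by decide⟩
  obtain ⟨x1, hx1a, hx1j⟩ :=
    (hrep.1 1 10 (by decide)).mpr ⟨by decide, by decide⟩
  obtain ⟨x2, hx2a, hx2j⟩ :=
    (hrep.1 2 11 (by decide)).mpr ⟨by decide, by decide⟩
  have negF : ∀ (u m : Fin 12) (am bm : ℝ), BaseSeg am bm ⊆ C m → myLt u m →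
      ∀ x ∈ C u, gfun am bm x < 0 :=
    fun u m am bm hseg hlt => leftOf_neg hseg (hrep.2 u m hlt).2
  have posF : ∀ (m v : Fin 12) (am bm : ℝ), BaseSeg am bm ⊆ C m → myLt m v →
      ∀ x ∈ C v, 0 < gfun am bm x := by
    intro m v am bm hseg hlt
    obtain ⟨av, bv, hsegv⟩ := (hQC v).2.2.2
    exact sep_pos hseg hsegv (hQC v).2.2.1 (hQC v).2.1.isPreconnected
      (hrep.2 m v hlt).1 (hrep.2 m v hlt).2
  obtain ⟨a3, b3, hs3⟩ := (hQC 3).2.2.2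
  obtain ⟨a4, b4, hs4⟩ := (hQC 4).2.2.2
  obtain ⟨a5, b5, hs5⟩ := (hQC 5).2.2.2
  obtain ⟨a6, b6, hs6⟩ := (hQC 6).2.2.2
  obtain ⟨a7, b7, hs7⟩ := (hQC 7).2.2.2
  obtain ⟨a8, b8, hs8⟩ := (hQC 8).2.2.2
  refine keyArith x0.2 x1.2 x2.2 x0.1 x1.1 x2.1 ?_
  intro s1 s2 s3
  cases s1 <;> cases s2 <;> cases s3
  · -- (F,F,F) : far left
    refine ⟨min (min x0.1 x1.1) x2.1 - 1, min (min x0.1 x1.1) x2.1 - 1,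
      ⟨fun h => Bool.noConfusion h, fun _ => ?_⟩,
      ⟨fun h => Bool.noConfusion h, fun _ => ?_⟩,
      ⟨fun h => Bool.noConfusion h, fun _ => ?_⟩⟩
    · have h1 : min (min x0.1 x1.1) x2.1 ≤ x0.1 := le_trans (min_le_left _ _) (min_le_left _ _)
      nlinarith [h1]
    · have h1 : min (min x0.1 x1.1) x2.1 ≤ x1.1 := le_trans (min_le_left _ _) (min_le_right _ _)
      nlinarith [h1]
    · have h1 : min (min x0.1 x1.1) x2.1 ≤ x2.1 := min_le_right _ _
      nlinarith [h1]
  · -- (F,F,T) : middle 5, S = {2}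
    refine ⟨a5, b5,
      ⟨fun h => Bool.noConfusion h, fun _ => ?_⟩,
      ⟨fun h => Bool.noConfusion h, fun _ => ?_⟩,
      ⟨fun _ => ?_, fun h => Bool.noConfusion h⟩⟩
    · have := posF 5 9 a5 b5 hs5 (by decide) x0 hx0j
      rw [conv_e]; linarith
    · have := posF 5 10 a5 b5 hs5 (by decide) x1 hx1j
      rw [conv_e]; linarith
    · have := negF 2 5 a5 b5 hs5 (by decide) x2 hx2a
      rw [conv_e]; linarith
  · -- (F,T,F) : middle 4, S = {1}
    refine ⟨a4, b4,
      ⟨fun h => Bool.noConfusion h, fun _ => ?_⟩,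
      ⟨fun _ => ?_, fun h => Bool.noConfusion h⟩,
      ⟨fun h => Bool.noConfusion h, fun _ => ?_⟩⟩
    · have := posF 4 9 a4 b4 hs4 (by decide) x0 hx0j
      rw [conv_e]; linarith
    · have := negF 1 4 a4 b4 hs4 (by decide) x1 hx1a
      rw [conv_e]; linarith
    · have := posF 4 11 a4 b4 hs4 (by decide) x2 hx2j
      rw [conv_e]; linarith
  · -- (F,T,T) : middle 8, S = {1,2}
    refine ⟨a8, b8,
      ⟨fun h => Bool.noConfusion h, fun _ => ?_⟩,
      ⟨fun _ => ?_, fun h => Bool.noConfusion h⟩,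
      ⟨fun _ => ?_, fun h => Bool.noConfusion h⟩⟩
    · have := posF 8 9 a8 b8 hs8 (by decide) x0 hx0j
      rw [conv_e]; linarith
    · have := negF 1 8 a8 b8 hs8 (by decide) x1 hx1a
      rw [conv_e]; linarith
    · have := negF 2 8 a8 b8 hs8 (by decide) x2 hx2a
      rw [conv_e]; linarith
  · -- (T,F,F) : middle 3, S = {0}
    refine ⟨a3, b3,
      ⟨fun _ => ?_, fun h => Bool.noConfusion h⟩,
      ⟨fun h => Bool.noConfusion h, fun _ => ?_⟩,
      ⟨fun h => Bool.noConfusion h, fun _ => ?_⟩⟩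
    · have := negF 0 3 a3 b3 hs3 (by decide) x0 hx0a
      rw [conv_e]; linarith
    · have := posF 3 10 a3 b3 hs3 (by decide) x1 hx1j
      rw [conv_e]; linarith
    · have := posF 3 11 a3 b3 hs3 (by decide) x2 hx2j
      rw [conv_e]; linarith
  · -- (T,F,T) : middle 7, S = {0,2}
    refine ⟨a7, b7,
      ⟨fun _ => ?_, fun h => Bool.noConfusion h⟩,
      ⟨fun h => Bool.noConfusion h, fun _ => ?_⟩,
      ⟨fun _ => ?_, fun h => Bool.noConfusion h⟩⟩
    · have := negF 0 7 a7 b7 hs7 (by decide) x0 hx0a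
      rw [conv_e]; linarith
    · have := posF 7 10 a7 b7 hs7 (by decide) x1 hx1j
      rw [conv_e]; linarith
    · have := negF 2 7 a7 b7 hs7 (by decide) x2 hx2a
      rw [conv_e]; linarith
  · -- (T,T,F) : middle 6, S = {0,1}
    refine ⟨a6, b6,
      ⟨fun _ => ?_, fun h => Bool.noConfusion h⟩,
      ⟨fun _ => ?_, fun h => Bool.noConfusion h⟩,
      ⟨fun h => Bool.noConfusion h, fun _ => ?_⟩⟩
    · have := negF 0 6 a6 b6 hs6 (by decide) x0 hx0a
      rw [conv_e]; linarith
    · have := negF 1 6 a6 b6 hs6 (by decide) x1 hx1a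
      rw [conv_e]; linarith
    · have := posF 6 11 a6 b6 hs6 (by decide) x2 hx2j
      rw [conv_e]; linarith
  · -- (T,T,T) : far right
    refine ⟨max (max x0.1 x1.1) x2.1 + 1, max (max x0.1 x1.1) x2.1 + 1,
      ⟨fun _ => ?_, fun h => Bool.noConfusion h⟩,
      ⟨fun _ => ?_, fun h => Bool.noConfusion h⟩,
      ⟨fun _ => ?_, fun h => Bool.noConfusion h⟩⟩
    · have h1 : x0.1 ≤ max (max x0.1 x1.1) x2.1 := le_trans (le_max_left _ _) (le_max_left _ _)
      nlinarith [h1]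
    · have h1 : x1.1 ≤ max (max x0.1 x1.1) x2.1 := le_trans (le_max_right _ _) (le_max_left _ _)
      nlinarith [h1]
    · have h1 : x2.1 ≤ max (max x0.1 x1.1) x2.1 := le_max_right _ _
      nlinarith [h1]

/-! ### dimension is not two -/

lemma no2dim : ¬ ∃ r1 r2 : Fin 12 → Fin 12 → Prop,
    IsStrictTotalOrder (Fin 12) r1 ∧ IsStrictTotalOrder (Fin 12) r2 ∧
    (∀ a b, myLt a b ↔ r1 a b ∧ r2 a b) := by
  rintro ⟨r1, r2, h1, h2, hiff⟩
  haveI := h1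
  haveI := h2
  have rev : ∀ (u v : Fin 12), u ≠ v → ¬ myLt u v → (r1 v u ∨ r2 v u) := by
    intro u v hne hn
    have hnb : ¬ (r1 u v ∧ r2 u v) := fun h => hn ((hiff u v).mpr h)
    rcases trichotomous_of r1 u v with h|h|h
    · rcases trichotomous_of r2 u v with g|g|g
      · exact absurd ⟨h, g⟩ hnb
      · exact absurd g hne
      · exact Or.inr g
    · exact absurd h hne
    · exact Or.inl h
  have cyc : ∀ (r : Fin 12 → Fin 12 → Prop), Transitive r → Irreflexive r →
      ∀ {p q P Q : Fin 12}, r P p → r p Q → r Q q → r q P → False :=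
    fun r ht hi _ _ _ _ g1 g2 g3 g4 => hi _ (ht (ht (ht g1 g2) g3) g4)
  have tr1 : Transitive r1 := fun _ _ _ a b => trans_of r1 a b
  have tr2 : Transitive r2 := fun _ _ _ a b => trans_of r2 a b
  have ir1 : Irreflexive r1 := fun a => irrefl_of r1 a
  have ir2 : Irreflexive r2 := fun a => irrefl_of r2 a
  have f : ∀ u v, myLt u v → r1 u v ∧ r2 u v := fun u v h => (hiff u v).mp h
  have hA := rev 0 9 (by decide) (by decide)
  have hB := rev 1 10 (by decide) (by decide)
  have hC := rev 2 11 (by decide) (by decide)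
  rcases hA with a|a <;> rcases hB with b|b <;> rcases hC with c|c
  · exact cyc r1 tr1 ir1 a (f 0 10 (by decide)).1 b (f 1 9 (by decide)).1
  · exact cyc r1 tr1 ir1 a (f 0 10 (by decide)).1 b (f 1 9 (by decide)).1
  · exact cyc r1 tr1 ir1 a (f 0 11 (by decide)).1 c (f 2 9 (by decide)).1
  · exact cyc r2 tr2 ir2 b (f 1 11 (by decide)).2 c (f 2 10 (by decide)).2
  · exact cyc r1 tr1 ir1 b (f 1 11 (by decide)).1 c (f 2 10 (by decide)).1
  · exact cyc r2 tr2 ir2 a (f 0 11 (by decide)).2 c (f 2 9 (by decide)).2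
  · exact cyc r2 tr2 ir2 a (f 0 10 (by decide)).2 b (f 1 9 (by decide)).2
  · exact cyc r2 tr2 ir2 a (f 0 10 (by decide)).2 b (f 1 9 (by decide)).2

/-- There is a 12-element poset of height exactly 3 and order dimension
exactly 3 (an intersection of three linear orders but of no two) that is not
quasi-convex. -/
theorem stmt6 :
    ∃ lt : Fin 12 → Fin 12 → Prop,
      IsStrictOrder (Fin 12) lt ∧
      (∃ a b c, lt a b ∧ lt b c) ∧
      (¬ ∃ a b c d, lt a b ∧ lt b c ∧ lt c d) ∧
      (∃ r₁ r₂ r₃ : Fin 12 → Fin 12 → Prop,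
        IsStrictTotalOrder (Fin 12) r₁ ∧ IsStrictTotalOrder (Fin 12) r₂ ∧
        IsStrictTotalOrder (Fin 12) r₃ ∧
        (∀ a b, lt a b ↔ r₁ a b ∧ r₂ a b ∧ r₃ a b)) ∧
      (¬ ∃ r₁ r₂ : Fin 12 → Fin 12 → Prop,
        IsStrictTotalOrder (Fin 12) r₁ ∧ IsStrictTotalOrder (Fin 12) r₂ ∧
        (∀ a b, lt a b ↔ r₁ a b ∧ r₂ a b)) ∧
      ¬ QuasiConvexPoset lt := by
  refine ⟨myLt, { irrefl := by decide, trans := by decide },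
    ⟨0, 3, 10, by decide, by decide⟩, ?_, ?_, no2dim, not_qc⟩
  · rintro ⟨a, b, c, d, h1, h2, h3⟩
    have l1 := lvl_mono a b h1
    have l2 := lvl_mono b c h2
    have l3 := lvl_mono c d h3
    have hb : ∀ x, lvl x ≤ 2 := by decide
    have := hb a; have := hb d
    omega
  · refine ⟨R1, R2, R3,
      { trichotomous := by decide, irrefl := by decide, trans := by decide },
      { trichotomous := by decide, irrefl := by decide, trans := by decide },
      { trichotomous := by decide, irrefl := by decide, trans := by decide },
      by decide⟩
end

section
/- On-line curve representation invariant, order-theoretic core: let P be a finite poset and 𝒞 a family of y-monotone curves spanned between two horizontal lines representing P (curves intersect iff elements are incomparable; disjoint curves ordered left-to-right as in P), satisfying property (*): for every linear extension L of P there is a horizontal line crossing all curves in distinct points in the left-to-right order given by L. Then for any extension of P by one new element x, the curve for x constructed through the ε-tubes of the lines of (*) yields a representation of P ∪ {x} again satisfying (*). -/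
/-!
On each line given by (*) the curves appear in a strict order, and strict inequalities between
continuous curves persist on a whole interval of heights. So every linear extension `L` of the new
poset can be assigned its own height, at which the old curves appear in the order `L` induces,
with distinct extensions getting distinct heights (Hall's theorem, the candidate sets being
infinite). At the height of `L` there is a gap between the curves `L` puts before `x` and those it
puts after `x`; by Tietze's theorem a continuous curve passes through a point of every such gap
while staying strictly between the curves of the elements below `x` and those above `x`. Then (*)
holds for the new family, and an element incomparable to `x` comes before `x` on one line and
after it on another, so the intermediate value theorem gives the crossing.
-/

open Set

/-- A family of y-monotone curves (graphs of continuous functions on [0,1], the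
x-coordinate as a function of the height) represents the strict order `lt`:
for lt i j the curve of i lies strictly left of the curve of j at every height (so
the curves are disjoint and ordered left-to-right), and two distinct curves intersect
iff the corresponding elements are incomparable. -/
def RepCurves {ι : Type*} (lt : ι → ι → Prop) (c : ι → ℝ → ℝ) : Prop :=
  (∀ i, ContinuousOn (c i) (Icc 0 1)) ∧
  (∀ i j, lt i j → ∀ t ∈ Icc (0:ℝ) 1, c i t < c j t) ∧
  (∀ i j, i ≠ j → ((¬ lt i j ∧ ¬ lt j i) ↔ ∃ t ∈ Icc (0:ℝ) 1, c i t = c j t))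

/-- Property (*): for every linear extension L of the order there is a horizontal
line (a height t) crossing the curves in distinct points in the left-to-right order
given by L. -/
def StarProp {ι : Type*} (lt : ι → ι → Prop) (c : ι → ℝ → ℝ) : Prop :=
  ∀ L : ι → ι → Prop, IsStrictTotalOrder ι L → (∀ i j, lt i j → L i j) →
    ∃ t ∈ Icc (0:ℝ) 1, ∀ i j, L i j → c i t < c j t

open Filter Topology Function

theorem exists_abs_lt_of_continuousOn {ι α : Type*} [Finite ι] [TopologicalSpace α] {K : Set α}
    (hK : IsCompact K) {c : ι → α → ℝ} (hc : ∀ i, ContinuousOn (c i) K) :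
    ∃ B, 0 < B ∧ ∀ i, ∀ t ∈ K, |c i t| < B := by
  choose C hC using fun i => hK.exists_bound_of_continuousOn (hc i)
  obtain ⟨M, hM⟩ := Finite.exists_le C
  refine ⟨max M 0 + 1, by positivity, fun i t ht => ?_⟩
  have := hC i t ht
  rw [Real.norm_eq_abs] at this
  linarith [hM i, le_max_left M 0]

theorem exists_injective_forall_mem_of_infinite {ι α : Type*} [Finite ι] {S : ι → Set α}
    (hS : ∀ i, (S i).Infinite) : ∃ f : ι → α, Injective f ∧ ∀ i, f i ∈ S i := by
  classical
  have := Fintype.ofFinite ι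
  choose T hTS hT using fun i => (hS i).exists_subset_card_eq (Fintype.card ι)
  obtain ⟨f, hf, hfT⟩ := (Finset.all_card_le_biUnion_card_iff_exists_injective T).1 fun s => by
    rcases s.eq_empty_or_nonempty with rfl | ⟨i, hi⟩
    · simp
    · calc s.card ≤ Fintype.card ι := Finset.card_le_univ s
        _ = (T i).card := (hT i).symm
        _ ≤ (s.biUnion T).card := Finset.card_le_card (Finset.subset_biUnion_of_mem T hi)
  exact ⟨f, hf, fun i => hTS i (hfT i)⟩

theorem infinite_of_mem_nhdsWithin_Icc {a b t : ℝ} (hab : a < b) (ht : t ∈ Icc a b)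
    {s : Set ℝ} (hs : s ∈ 𝓝[Icc a b] t) : s.Infinite := by
  obtain ⟨ε, hε, hsub⟩ := Metric.mem_nhdsWithin_iff.1 hs
  have hlt : max a (t - ε / 2) < min b (t + ε / 2) := by
    simp only [lt_min_iff, max_lt_iff]
    exact ⟨⟨hab, by linarith [ht.2]⟩, by linarith [ht.1], by linarith⟩
  refine (Icc_infinite hlt).mono fun y hy => hsub ⟨?_, ?_⟩
  · rw [Metric.mem_ball, Real.dist_eq, abs_sub_lt_iff]
    constructor <;> linarith [hy.1, hy.2, le_max_right a (t - ε / 2), min_le_right b (t + ε / 2)]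
  · exact ⟨(le_max_left _ _).trans hy.1, hy.2.trans (min_le_left _ _)⟩

theorem exists_continuousMap_interpolating_forall_mem {α Y : Type*} [Finite α] [TopologicalSpace Y]
    [T1Space Y] [NormalSpace Y] {h : α → Y} (hh : Injective h) {S : Set ℝ} [S.OrdConnected]
    (hS : S.Nonempty) {v : α → ℝ} (hv : ∀ a, v a ∈ S) :
    ∃ ψ : C(Y, ℝ), (∀ y, ψ y ∈ S) ∧ ∀ a, ψ (h a) = v a := by
  let e := Equiv.ofInjective h hh
  obtain ⟨ψ, hψS, hψ⟩ := ContinuousMap.exists_extension_forall_mem_of_isClosedEmbedding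
    ⟨v ∘ e.symm, continuous_of_discreteTopology⟩ (fun _ => hv _) hS
    (finite_range h).isClosed.isClosedEmbedding_subtypeVal
  refine ⟨ψ, hψS, fun a => ?_⟩
  simpa [e] using congrFun hψ (e a)

theorem exists_continuousOn_mem_Ioo_interpolating {α Y : Type*} [Finite α] [TopologicalSpace Y]
    [T1Space Y] [NormalSpace Y] {K : Set Y} {lo hi : Y → ℝ} (hlo : ContinuousOn lo K)
    (hhi : ContinuousOn hi K) (hlohi : ∀ y ∈ K, lo y < hi y) {h : α → Y} (hh : Injective h)
    (hK : ∀ a, h a ∈ K) {m : α → ℝ} (hm : ∀ a, m a ∈ Ioo (lo (h a)) (hi (h a))) :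
    ∃ g : Y → ℝ, ContinuousOn g K ∧ (∀ y ∈ K, g y ∈ Ioo (lo y) (hi y)) ∧ ∀ a, g (h a) = m a := by
  have hw : ∀ a, 0 < hi (h a) - lo (h a) := fun a => sub_pos.2 (hlohi _ (hK a))
  obtain ⟨ψ, hψ, hψh⟩ := exists_continuousMap_interpolating_forall_mem hh (S := Ioo 0 1)
    ⟨1 / 2, by norm_num⟩ (v := fun a => (m a - lo (h a)) / (hi (h a) - lo (h a)))
    fun a => ⟨div_pos (sub_pos.2 (hm a).1) (hw a),
      (div_lt_one (hw a)).2 (sub_lt_sub_right (hm a).2 _)⟩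
  refine ⟨fun y => lo y + ψ y * (hi y - lo y), hlo.add (ψ.continuous.continuousOn.mul
    (hhi.sub hlo)), fun y hy => ?_, fun a => ?_⟩
  · have hw : 0 < hi y - lo y := sub_pos.2 (hlohi y hy)
    exact ⟨lt_add_of_pos_right _ (mul_pos (hψ y).1 hw),
      by linarith [mul_lt_of_lt_one_left hw (hψ y).2]⟩
  · simp only [hψh]
    field_simp [(hw a).ne']
    ring

section Envelope

open Finset

variable {ι : Type*} [Fintype ι] (p : ι → Prop) (B : ℝ) (c : ι → ℝ → ℝ)

/- With `B` a bound on all `|c i t|`, the constants `-B` and `B` act as extra curves below and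
above all others, so that the envelope of an empty family is still a strict bound. -/
open Classical in
noncomputable def lowerEnvelope (t : ℝ) : ℝ := (univ.filter p).fold max (-B) (c · t)

open Classical in
noncomputable def upperEnvelope (t : ℝ) : ℝ := (univ.filter p).fold min B (c · t)

variable {p B c}

theorem le_lowerEnvelope {i : ι} (hi : p i) (t : ℝ) : c i t ≤ lowerEnvelope p B c t := by
  classical
  exact (le_fold_max _).2 (Or.inr ⟨i, mem_filter.2 ⟨mem_univ i, hi⟩, le_rfl⟩)

theorem upperEnvelope_le {i : ι} (hi : p i) (t : ℝ) : upperEnvelope p B c t ≤ c i t := by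
  classical
  exact (fold_min_le _).2 (Or.inr ⟨i, mem_filter.2 ⟨mem_univ i, hi⟩, le_rfl⟩)

theorem lowerEnvelope_mono {q : ι → Prop} (hpq : ∀ i, p i → q i) (t : ℝ) :
    lowerEnvelope p B c t ≤ lowerEnvelope q B c t := by
  classical
  exact (fold_max_le _).2 ⟨(le_fold_max _).2 (Or.inl le_rfl),
    fun i hi => le_lowerEnvelope (hpq i (mem_filter.1 hi).2) t⟩

theorem upperEnvelope_anti {q : ι → Prop} (hqp : ∀ i, q i → p i) (t : ℝ) :
    upperEnvelope p B c t ≤ upperEnvelope q B c t := by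
  classical
  exact (le_fold_min _).2 ⟨(fold_min_le _).2 (Or.inl le_rfl),
    fun i hi => upperEnvelope_le (hqp i (mem_filter.1 hi).2) t⟩

theorem lowerEnvelope_lt_upperEnvelope {q : ι → Prop} {t : ℝ} (hB₀ : 0 < B)
    (hB : ∀ i, |c i t| < B)
    (hpq : ∀ i j, p i → q j → c i t < c j t) :
    lowerEnvelope p B c t < upperEnvelope q B c t := by
  classical
  have hB' : ∀ i, -B < c i t ∧ c i t < B := fun i => abs_lt.1 (hB i)
  refine (fold_max_lt _).2 ⟨(lt_fold_min _).2 ⟨neg_lt_self hB₀, fun j _ => (hB' j).1⟩, fun i hi =>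
    (lt_fold_min _).2 ⟨(hB' i).2, fun j hj => hpq i j (mem_filter.1 hi).2 (mem_filter.1 hj).2⟩⟩

theorem continuousOn_lowerEnvelope {K : Set ℝ} (hc : ∀ i, ContinuousOn (c i) K) :
    ContinuousOn (lowerEnvelope p B c) K := by
  classical
  suffices ∀ s : Finset ι, ContinuousOn (fun t => s.fold max (-B) (c · t)) K from this _
  intro s
  induction s using Finset.induction_on with
  | empty => exact continuousOn_const
  | insert i s hi ih => simpa only [fold_insert hi] using (hc i).sup ih

theorem continuousOn_upperEnvelope {K : Set ℝ} (hc : ∀ i, ContinuousOn (c i) K) :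
    ContinuousOn (upperEnvelope p B c) K := by
  classical
  suffices ∀ s : Finset ι, ContinuousOn (fun t => s.fold min B (c · t)) K from this _
  intro s
  induction s using Finset.induction_on with
  | empty => exact continuousOn_const
  | insert i s hi ih => simpa only [fold_insert hi] using (hc i).inf ih

end Envelope

section LinearExtension

variable {X : Type*} [PartialOrder X]

variable (X) in
abbrev LinExt : Type _ := {L : X → X → Prop // IsStrictTotalOrder X L ∧ ∀ a b : X, a < b → L a b}

theorem exists_linExt_of_not_le {a b : X} (hba : ¬ b ≤ a) : ∃ L : LinExt X, L.1 a b := by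
  -- `≤` with `a ≤ b` adjoined
  let r : X → X → Prop := fun i j => i ≤ j ∨ (i ≤ a ∧ b ≤ j)
  have : IsPartialOrder X r :=
    { refl := fun i => Or.inl le_rfl
      trans := by
        rintro i j k (h | ⟨hia, hbj⟩) (h' | ⟨hja, hbk⟩)
        · exact Or.inl (h.trans h')
        · exact Or.inr ⟨h.trans hja, hbk⟩
        · exact Or.inr ⟨hia, hbj.trans h'⟩
        · exact absurd (hbj.trans hja) hba
      antisymm := by
        rintro i j (h | ⟨hia, hbj⟩) (h' | ⟨hja, hbi⟩)
        · exact h.antisymm h'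
        · exact absurd (hbi.trans (h.trans hja)) hba
        · exact absurd (hbj.trans (h'.trans hia)) hba
        · exact absurd (hbj.trans hja) hba }
  obtain ⟨s, hs, hrs⟩ := extend_partialOrder r
  refine ⟨⟨fun i j => ¬ s j i, ?_, fun i j hij hji => ?_⟩, fun hba' => ?_⟩
  · exact
      { trichotomous := fun i j hij hji => antisymm (not_not.1 hji) (not_not.1 hij)
        irrefl := fun i h => h (refl i)
        trans := fun i j k hij hjk hki =>
          hjk (_root_.trans hki ((total_of s i j).resolve_right hij)) }
  · exact hij.ne (antisymm (hrs _ _ (Or.inl hij.le)) hji)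
  · exact hba (antisymm (hrs _ _ (Or.inr ⟨le_rfl, le_rfl⟩)) hba').ge

end LinearExtension

theorem repCurves_of_starProp {X : Type*} [PartialOrder X] {c : X → ℝ → ℝ}
    (hc : ∀ i, ContinuousOn (c i) (Icc 0 1))
    (hlt : ∀ i j, i < j → ∀ t ∈ Icc (0:ℝ) 1, c i t < c j t) (hstar : StarProp (· < ·) c) :
    RepCurves (· < ·) c := by
  refine ⟨hc, hlt, fun i j hij => ⟨fun ⟨hij', hji'⟩ => ?_, ?_⟩⟩
  · obtain ⟨⟨L₁, hL₁, hext₁⟩, h₁⟩ := exists_linExt_of_not_le fun h => hji' (h.lt_of_ne hij.symm)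
    obtain ⟨⟨L₂, hL₂, hext₂⟩, h₂⟩ := exists_linExt_of_not_le fun h => hij' (h.lt_of_ne hij)
    obtain ⟨t₁, ht₁, ho₁⟩ := hstar L₁ hL₁ hext₁
    obtain ⟨t₂, ht₂, ho₂⟩ := hstar L₂ hL₂ hext₂
    exact isPreconnected_Icc.intermediate_value₂ ht₁ ht₂ (hc i) (hc j)
      (ho₁ _ _ h₁).le (ho₂ _ _ h₂).le
  · rintro ⟨t, ht, heq⟩
    exact ⟨fun h => (hlt i j h t ht).ne heq, fun h => (hlt j i h t ht).ne' heq⟩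

theorem StarProp.infinite_setOf_ordered {κ : Type*} [Finite κ] {lt : κ → κ → Prop}
    {c : κ → ℝ → ℝ} (hstar : StarProp lt c) (hc : ∀ i, ContinuousOn (c i) (Icc 0 1))
    {L : κ → κ → Prop} (hL : IsStrictTotalOrder κ L) (hext : ∀ i j, lt i j → L i j) :
    {t | t ∈ Icc (0:ℝ) 1 ∧ ∀ i j, L i j → c i t < c j t}.Infinite := by
  obtain ⟨t₀, ht₀, hord⟩ := hstar L hL hext
  have hev : ∀ᶠ t in 𝓝[Icc 0 1] t₀, ∀ i j, L i j → c i t < c j t := by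
    simp only [eventually_all]
    exact fun i j hij => ((hc i) t₀ ht₀).eventually_lt ((hc j) t₀ ht₀) (hord i j hij)
  exact infinite_of_mem_nhdsWithin_Icc zero_lt_one ht₀ (inter_mem self_mem_nhdsWithin hev)

theorem exists_injective_ordered_heights {X : Type*} [Finite X] [PartialOrder X] {x : X}
    {c : {y // y ≠ x} → ℝ → ℝ} (hc : ∀ i, ContinuousOn (c i) (Icc 0 1))
    (hstar : StarProp (fun a b : {y // y ≠ x} => (a : X) < b) c) :
    ∃ h : LinExt X → ℝ, Injective h ∧ (∀ L, h L ∈ Icc (0:ℝ) 1) ∧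
      ∀ L (i j : {y // y ≠ x}), L.1 i j → c i (h L) < c j (h L) := by
  obtain ⟨h, hinj, hh⟩ := exists_injective_forall_mem_of_infinite fun L : LinExt X =>
    have := L.2.1
    hstar.infinite_setOf_ordered hc (L := Subrel L.1 (· ≠ x)) {} fun i j hij => L.2.2 i j hij
  exact ⟨h, hinj, fun L => (hh L).1, fun L => (hh L).2⟩

section InsertCurve

variable {X : Type*} [DecidableEq X]

def insertCurve (x : X) (g : ℝ → ℝ) (c : {y // y ≠ x} → ℝ → ℝ) : X → ℝ → ℝ :=
  fun y => if h : y = x then g else c ⟨y, h⟩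

variable {x : X} {g : ℝ → ℝ} {c : {y // y ≠ x} → ℝ → ℝ}

theorem continuousOn_insertCurve {K : Set ℝ} (hg : ContinuousOn g K)
    (hc : ∀ i, ContinuousOn (c i) K) (y : X) : ContinuousOn (insertCurve x g c y) K := by
  unfold insertCurve
  split_ifs
  exacts [hg, hc _]

theorem insertCurve_lt_insertCurve {r : X → X → Prop} (hx : ¬ r x x) {t : ℝ}
    (hc : ∀ i j : {y // y ≠ x}, r i j → c i t < c j t)
    (hcg : ∀ i : {y // y ≠ x}, r i x → c i t < g t)
    (hgc : ∀ j : {y // y ≠ x}, r x j → g t < c j t) (p q : X) (hpq : r p q) :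
    insertCurve x g c p t < insertCurve x g c q t := by
  by_cases hp : p = x <;> by_cases hq : q = x
  · exact (hx (by rwa [hp, hq] at hpq)).elim
  · simpa [insertCurve, hp, hq] using hgc ⟨q, hq⟩ (hp ▸ hpq)
  · simpa [insertCurve, hp, hq] using hcg ⟨p, hp⟩ (hq ▸ hpq)
  · simpa [insertCurve, hp, hq] using hc ⟨p, hp⟩ ⟨q, hq⟩ hpq

end InsertCurve

theorem exists_insertCurve_starProp {X : Type*} [Fintype X] [DecidableEq X] [PartialOrder X]
    {x : X} {c : {y // y ≠ x} → ℝ → ℝ} (hc : ∀ i, ContinuousOn (c i) (Icc 0 1))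
    (hlt : ∀ i j : {y // y ≠ x}, (i : X) < j → ∀ t ∈ Icc (0:ℝ) 1, c i t < c j t)
    (hstar : StarProp (fun a b : {y // y ≠ x} => (a : X) < b) c) :
    ∃ g : ℝ → ℝ, ContinuousOn g (Icc 0 1) ∧
      (∀ i : {y // y ≠ x}, (i : X) < x → ∀ t ∈ Icc (0:ℝ) 1, c i t < g t) ∧
      (∀ j : {y // y ≠ x}, x < (j : X) → ∀ t ∈ Icc (0:ℝ) 1, g t < c j t) ∧
      StarProp (· < ·) (insertCurve x g c) := by
  obtain ⟨B, hB₀, hB⟩ := exists_abs_lt_of_continuousOn isCompact_Icc hc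
  obtain ⟨h, hinj, hhI, hord⟩ := exists_injective_ordered_heights hc hstar
  let lower (L : LinExt X) := lowerEnvelope (fun i : {y // y ≠ x} => L.1 i x) B c (h L)
  let upper (L : LinExt X) := upperEnvelope (fun j : {y // y ≠ x} => L.1 x j) B c (h L)
  have hgap (L : LinExt X) : lower L < upper L :=
    have := L.2.1
    lowerEnvelope_lt_upperEnvelope hB₀ (hB · _ (hhI L)) fun i j hi hj =>
      hord L i j (_root_.trans hi hj)
  have hmid (L : LinExt X) :
      lower L < (lower L + upper L) / 2 ∧ (lower L + upper L) / 2 < upper L :=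
    ⟨left_lt_add_div_two.2 (hgap L), add_div_two_lt_right.2 (hgap L)⟩
  obtain ⟨g, hgc, hg, hgm⟩ := exists_continuousOn_mem_Ioo_interpolating
    (lo := lowerEnvelope (fun i : {y // y ≠ x} => (i : X) < x) B c)
    (hi := upperEnvelope (fun j : {y // y ≠ x} => x < (j : X)) B c)
    (continuousOn_lowerEnvelope hc) (continuousOn_upperEnvelope hc)
    (fun t ht => lowerEnvelope_lt_upperEnvelope hB₀ (hB · t ht) fun i j hi hj =>
      hlt i j (hi.trans hj) t ht)
    hinj hhI (m := fun L => (lower L + upper L) / 2) fun L =>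
      ⟨(lowerEnvelope_mono (fun i : {y // y ≠ x} => L.2.2 i x) _).trans_lt (hmid L).1,
        (hmid L).2.trans_le (upperEnvelope_anti (fun j : {y // y ≠ x} => L.2.2 x j) _)⟩
  refine ⟨g, hgc, fun i hi t ht => (le_lowerEnvelope (i := i) hi t).trans_lt (hg t ht).1,
    fun j hj t ht => (hg t ht).2.trans_le (upperEnvelope_le (i := j) hj t),
    fun L hL hext => ?_⟩
  let L' : LinExt X := ⟨L, hL, hext⟩
  refine ⟨h L', hhI L', insertCurve_lt_insertCurve (hL.irrefl x) (hord L')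
    (fun i hi => ?_) fun j hj => ?_⟩
  · exact (le_lowerEnvelope (i := i) hi _).trans_lt (hgm L' ▸ (hmid L').1)
  · exact (hgm L' ▸ (hmid L').2).trans_le (upperEnvelope_le (i := j) hj _)

/-- On-line curve representation invariant. Let X be a finite poset,
x ∈ X a new element and suppose the elements other than x are represented by
y-monotone curves between two lines satisfying property (*) for the restricted order.
Then there is a curve for x such that the extended family represents the whole poset
and again satisfies (*). -/
theorem stmt8 {X : Type*} [Fintype X] [DecidableEq X] [PartialOrder X] (x : X)
    (c : {y : X // y ≠ x} → ℝ → ℝ)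
    (hrep : RepCurves (fun a b : {y : X // y ≠ x} => (a : X) < (b : X)) c)
    (hstar : StarProp (fun a b : {y : X // y ≠ x} => (a : X) < (b : X)) c) :
    ∃ g : ℝ → ℝ,
      RepCurves (fun a b : X => a < b)
        (fun y => if h : y = x then g else c ⟨y, h⟩) ∧
      StarProp (fun a b : X => a < b)
        (fun y => if h : y = x then g else c ⟨y, h⟩) := by
  obtain ⟨hc, hlt, -⟩ := hrep
  obtain ⟨g, hgc, hbelow, habove, hstar'⟩ := exists_insertCurve_starProp hc hlt hstar
  refine ⟨g, repCurves_of_starProp (continuousOn_insertCurve hgc hc) ?_ hstar', hstar'⟩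
  intro p q hpq t ht
  exact insertCurve_lt_insertCurve (lt_irrefl x) (fun i j h => hlt i j h t ht)
    (fun i h => hbelow i h t ht) (fun j h => habove j h t ht) p q hpq
end

section
/- Adversary lower bound for segments attached to a line: for every k ≥ 1 and every on-line coloring algorithm A, the adversary has a strategy S_k producing a finite family of segments in the closed upper half-plane, each with one endpoint on the horizontal line h, with clique number at most 2 (no three pairwise intersecting segments), together with a vertical line v such that: (1) any two segments pierced by v are disjoint, (2) every segment pierced by v is attached to h strictly right of v, and (3) A uses at least k distinct colors on the segments pierced by v. In particular, no on-line algorithm colors triangle-free intersection graphs of segments attached to a line with a bounded number of colors. -/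
/-!
The adversary keeps more geometric control than the statement asks for (`Layout`): the segments
lean left inside a box, and a gap `(z₁, z₂)` separates those pierced by the vertical lines in
it, which span the gap, from the others, which lie right of it.

For `k + 1` colours it runs the strategy for `k` colours twice, the second copy inside the gap
of the first and lower than it. A blocker attached at the right end of the second gap and
passing above the second copy but below the first meets exactly the pierced segments of the
second copy, so `A` must give it a colour outside the set `C₂` of their colours. If the colours
`C₁` of the pierced segments of the first copy all lie in `C₂`, the adversary presents the
blocker: its colour is new to `C₁`, and a line just right of its top pierces it and the first
copy. Otherwise a line in the second gap pierces both copies, which use more than `|C₂|`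
colours there.
-/
open Set

/-- A segment, given by its two endpoints in the plane. -/
abbrev Seg : Type := (ℝ × ℝ) × (ℝ × ℝ)

/-- The set of points of a segment. -/
def segSet (s : Seg) : Set (ℝ × ℝ) := segment ℝ s.1 s.2

/-- A segment attached to the horizontal line y = 0, lying in the closed upper
half-plane: its first endpoint is on the line. -/
def Attached (s : Seg) : Prop := s.1.2 = 0 ∧ 0 ≤ s.2.2

/-- The vertical line at x-coordinate v pierces the segment s: it meets its relative
interior. -/
def Pierces (v : ℝ) (s : Seg) : Prop := ∃ p ∈ openSegment ℝ s.1 s.2, p.1 = v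

/-- An on-line algorithm A (assigning a color to the last segment of each presented
prefix) is proper if it assigns distinct colors to intersecting segments. -/
def ProperOnline (A : List Seg → ℕ) : Prop :=
  ∀ l : List Seg, ∀ i j : Fin l.length, i ≠ j →
    (segSet (l.get i) ∩ segSet (l.get j)).Nonempty →
    A (l.take ((i : ℕ) + 1)) ≠ A (l.take ((j : ℕ) + 1))

namespace AttachedSegments

/-- The height above `x` of the line through the endpoints of `s`, when `s.1` lies on the
horizontal axis. -/
noncomputable def heightAt (s : Seg) (x : ℝ) : ℝ := s.2.2 * (s.1.1 - x) / (s.1.1 - s.2.1)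

lemma heightAt_top {s : Seg} (hlt : s.2.1 < s.1.1) : heightAt s s.2.1 = s.2.2 := by
  unfold heightAt
  field_simp [show s.1.1 - s.2.1 ≠ 0 by linarith]

lemma heightAt_foot (s : Seg) : heightAt s s.1.1 = 0 := by simp [heightAt]

lemma mem_segSet_iff {s : Seg} (h₀ : s.1.2 = 0) (hlt : s.2.1 < s.1.1) {pt : ℝ × ℝ} :
    pt ∈ segSet s ↔ pt.1 ∈ Icc s.2.1 s.1.1 ∧ pt.2 = heightAt s pt.1 := by
  have hd : s.1.1 - s.2.1 ≠ 0 := by linarith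
  rw [segSet, segment_eq_image']
  constructor
  · rintro ⟨θ, ⟨hθ₀, hθ₁⟩, rfl⟩
    simp only [heightAt, Prod.fst_add, Prod.snd_add, Prod.smul_fst, Prod.smul_snd, Prod.fst_sub,
      Prod.snd_sub, smul_eq_mul, h₀, mem_Icc]
    refine ⟨⟨by nlinarith, by nlinarith⟩, ?_⟩
    field_simp
    ring
  · rintro ⟨⟨hx₁, hx₂⟩, hy⟩
    refine ⟨(s.1.1 - pt.1) / (s.1.1 - s.2.1),
      ⟨div_nonneg (by linarith) (by linarith), div_le_one_of_le₀ (by linarith) (by linarith)⟩, ?_⟩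
    ext
    · simp only [Prod.fst_add, Prod.smul_fst, Prod.fst_sub, smul_eq_mul]
      field_simp
      ring
    · simp only [Prod.snd_add, Prod.smul_snd, Prod.snd_sub, smul_eq_mul, hy, heightAt, h₀]
      ring

lemma pierces_iff {s : Seg} (hlt : s.2.1 < s.1.1) {v : ℝ} :
    Pierces v s ↔ s.2.1 < v ∧ v < s.1.1 := by
  have h := image_openSegment ℝ (LinearMap.fst ℝ ℝ ℝ).toAffineMap s.1 s.2
  simp only [LinearMap.coe_toAffineMap, LinearMap.coe_fst] at h
  rw [Pierces, ← mem_Ioo, ← openSegment_eq_Ioo hlt, openSegment_symm ℝ s.2.1, ← h]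
  rfl

/-- The height difference `heightAt t - heightAt s` changes sign on `[s.2.1, t.1.1]`. -/
lemma segSet_inter_nonempty {s t : Seg} (hs₀ : Attached s) (ht₀ : t.1.2 = 0)
    (hs : s.2.1 < s.1.1) (hts : t.2.1 < s.2.1) (hst : s.2.1 ≤ t.1.1) (hfeet : t.1.1 ≤ s.1.1)
    (hbelow : s.2.2 < heightAt t s.2.1) : (segSet s ∩ segSet t).Nonempty := by
  have ht : t.2.1 < t.1.1 := by linarith
  have hcont : ContinuousOn (fun x => heightAt t x - heightAt s x) (Icc s.2.1 t.1.1) := by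
    unfold heightAt; fun_prop
  have hleft : 0 ≤ heightAt t s.2.1 - heightAt s s.2.1 := by
    rw [heightAt_top hs]
    linarith
  have hright : heightAt t t.1.1 - heightAt s t.1.1 ≤ 0 := by
    have : 0 ≤ heightAt s t.1.1 :=
      div_nonneg (mul_nonneg hs₀.2 (by linarith)) (by linarith)
    rw [heightAt_foot]
    linarith
  obtain ⟨x, hx, hx0⟩ := intermediate_value_Icc' hst hcont ⟨hright, hleft⟩
  refine ⟨(x, heightAt s x), (mem_segSet_iff hs₀.1 hs).2 ⟨⟨hx.1, by linarith [hx.2]⟩, rfl⟩,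
    (mem_segSet_iff ht₀ ht).2 ⟨⟨by linarith [hx.1], hx.2⟩, ?_⟩⟩
  simp only at hx0 ⊢
  linarith

/-- The segment attached at `y₂` through the point `(y₁, h)`, with its top above `x₀`. -/
noncomputable def blocker (x₀ y₁ y₂ h : ℝ) : Seg := ((y₂, 0), (x₀, h * (y₂ - x₀) / (y₂ - y₁)))

lemma le_heightAt_blocker {x₀ y₁ y₂ h x : ℝ} (hx₀ : x₀ < y₂) (hy : y₁ < y₂) (hh : 0 ≤ h)
    (hx : x ≤ y₁) : h ≤ heightAt (blocker x₀ y₁ y₂ h) x := by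
  have hx₀' : y₂ - x₀ ≠ 0 := by linarith
  have hy' : 0 < y₂ - y₁ := by linarith
  have : heightAt (blocker x₀ y₁ y₂ h) x = h * (y₂ - x) / (y₂ - y₁) := by
    simp only [heightAt, blocker]
    field_simp
  rw [this, le_div_iff₀ hy']
  nlinarith

section TriangleFree

def TriangleFree (l : List Seg) : Prop :=
  ∀ s ∈ l, ∀ t ∈ l, ∀ u ∈ l, s ≠ t → s ≠ u → t ≠ u →
    ¬ ((segSet s ∩ segSet t).Nonempty ∧ (segSet s ∩ segSet u).Nonempty ∧
       (segSet t ∩ segSet u).Nonempty)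

variable {l l₁ l₂ : List Seg}

lemma TriangleFree.append (h₁ : TriangleFree l₁) (h₂ : TriangleFree l₂)
    (h : ∀ s ∈ l₁, ∀ t ∈ l₂, Disjoint (segSet s) (segSet t)) : TriangleFree (l₁ ++ l₂) := by
  have cross : ∀ s ∈ l₁, ∀ t ∈ l₂,
      ¬ (segSet s ∩ segSet t).Nonempty ∧ ¬ (segSet t ∩ segSet s).Nonempty := fun s hs t ht =>
    ⟨Set.not_nonempty_iff_eq_empty.2 (h s hs t ht).inter_eq,
      Set.not_nonempty_iff_eq_empty.2 (h s hs t ht).symm.inter_eq⟩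
  intro s hs t ht u hu hst hsu htu
  rw [List.mem_append] at hs ht hu
  rcases hs with hs | hs <;> rcases ht with ht | ht <;> rcases hu with hu | hu
  · exact h₁ s hs t ht u hu hst hsu htu
  · exact fun ⟨_, _, htu'⟩ => (cross t ht u hu).1 htu'
  · exact fun ⟨hst', _, _⟩ => (cross s hs t ht).1 hst'
  · exact fun ⟨hst', _, _⟩ => (cross s hs t ht).1 hst'
  · exact fun ⟨hst', _, _⟩ => (cross t ht s hs).2 hst'
  · exact fun ⟨_, _, htu'⟩ => (cross t ht u hu).1 htu'
  · exact fun ⟨_, hsu', _⟩ => (cross u hu s hs).2 hsu'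
  · exact h₂ s hs t ht u hu hst hsu htu

lemma TriangleFree.concat {d : Seg} (h : TriangleFree l)
    (hd : ∀ s ∈ l, ∀ t ∈ l, s ≠ t → (segSet s ∩ segSet d).Nonempty →
      (segSet t ∩ segSet d).Nonempty → Disjoint (segSet s) (segSet t)) :
    TriangleFree (l ++ [d]) := by
  have hd' : ∀ s ∈ l, ∀ t ∈ l, s ≠ t → (segSet s ∩ segSet d).Nonempty →
      (segSet t ∩ segSet d).Nonempty → ¬ (segSet s ∩ segSet t).Nonempty :=
    fun s hs t ht hst hsd htd => Set.not_nonempty_iff_eq_empty.2 (hd s hs t ht hst hsd htd).inter_eq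
  intro s hs t ht u hu hst hsu htu
  simp only [List.mem_append, List.mem_singleton] at hs ht hu
  rcases hs with hs | rfl <;> rcases ht with ht | rfl <;> rcases hu with hu | rfl
  · exact h s hs t ht u hu hst hsu htu
  · exact fun ⟨hst', hsu', htu'⟩ => hd' s hs t ht hst hsu' htu' hst'
  · exact fun ⟨hst', hsu', htu'⟩ => hd' s hs u hu hsu hst' (by rwa [Set.inter_comm]) hsu'
  · exact (htu rfl).elim
  · exact fun ⟨hst', hsu', htu'⟩ =>
      hd' t ht u hu htu (by rwa [Set.inter_comm]) (by rwa [Set.inter_comm]) htu'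
  · exact (hsu rfl).elim
  · exact (hst rfl).elim
  · exact (hst rfl).elim

end TriangleFree

section Colors

def colorsOn (A : List Seg → ℕ) (pre l : List Seg) (P : Seg → Prop) : Set ℕ :=
  {γ | ∃ u s, u ++ [s] <+: l ∧ P s ∧ A (pre ++ u ++ [s]) = γ}

variable {A : List Seg → ℕ} {pre l l₁ l₂ : List Seg} {P P' : Seg → Prop}

lemma colorsOn_finite : (colorsOn A pre l P).Finite := by
  refine ((List.finite_toSet l.inits).image fun u => A (pre ++ u)).subset ?_
  rintro _ ⟨u, s, hu, -, rfl⟩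
  exact ⟨u ++ [s], (List.mem_inits _ _).2 hu, by rw [List.append_assoc]⟩

lemma colorsOn_mono (h : ∀ s ∈ l, P s → P' s) : colorsOn A pre l P ⊆ colorsOn A pre l P' := by
  rintro _ ⟨u, s, hu, hs, rfl⟩
  exact ⟨u, s, hu, h s (hu.subset (by simp)) hs, rfl⟩

lemma colorsOn_append_left : colorsOn A pre l₁ P ⊆ colorsOn A pre (l₁ ++ l₂) P := by
  rintro _ ⟨u, s, hu, hs, rfl⟩
  exact ⟨u, s, hu.trans (List.prefix_append _ _), hs, rfl⟩

lemma colorsOn_append_right : colorsOn A (pre ++ l₁) l₂ P ⊆ colorsOn A pre (l₁ ++ l₂) P := by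
  rintro _ ⟨u, s, hu, hs, rfl⟩
  exact ⟨l₁ ++ u, s, by simpa using hu, hs, by simp⟩

lemma mem_colorsOn_concat {d : Seg} (hd : P d) :
    A (pre ++ l ++ [d]) ∈ colorsOn A pre (l ++ [d]) P :=
  ⟨l, d, List.prefix_refl _, hd, rfl⟩

lemma colorsOn_nil :
    colorsOn A [] l P = {γ | ∃ i : Fin l.length, P (l.get i) ∧ A (l.take ((i : ℕ) + 1)) = γ} := by
  ext γ
  constructor
  · rintro ⟨u, s, hu, hs, rfl⟩
    have hlen : u.length < l.length := by simpa using hu.length_le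
    refine ⟨⟨u.length, hlen⟩, ?_, ?_⟩
    · simpa [← hu.getElem (by simp : u.length < (u ++ [s]).length)] using hs
    · rw [List.nil_append, List.prefix_iff_eq_take.1 hu, List.length_append]; rfl
  · rintro ⟨i, hi, rfl⟩
    refine ⟨l.take i, l.get i, ?_, hi, ?_⟩
    · rw [← List.concat_eq_append, List.get_eq_getElem, List.take_concat_get]
      exact List.take_prefix _ _
    · rw [List.nil_append, ← List.concat_eq_append, List.get_eq_getElem, List.take_concat_get]

lemma notMem_colorsOn (hA : ProperOnline A) {d : Seg}
    (hd : ∀ s ∈ l, P s → (segSet s ∩ segSet d).Nonempty) :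
    A (pre ++ l ++ [d]) ∉ colorsOn A pre l P := by
  rintro ⟨u, s, ⟨w, rfl⟩, hs, heq⟩
  set L := pre ++ (u ++ [s] ++ w) ++ [d]
  have hi : (pre ++ u).length < L.length := by simp [L]
  have hj : (pre ++ (u ++ [s] ++ w)).length < L.length := by simp [L]
  refine hA L ⟨_, hi⟩ ⟨_, hj⟩ (by simp [Fin.ext_iff]) ?_ ?_
  · have hs' : L.get ⟨_, hi⟩ = s := by simp [L, List.getElem_append_right]
    have hd' : L.get ⟨_, hj⟩ = d := by simp [L]
    rw [hs', hd']
    exact hd s (by simp) hs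
  · have hsL : L.take ((pre ++ u).length + 1) = pre ++ u ++ [s] := by
      rw [show L = (pre ++ u ++ [s]) ++ (w ++ [d]) by simp [L]]
      exact List.take_left' (by simp; omega)
    have hdL : L.take ((pre ++ (u ++ [s] ++ w)).length + 1) = L :=
      List.take_of_length_le (by simp [L]; omega)
    rw [hsL, hdL]
    exact heq

end Colors

section Layout

/-- The shape of the adversary's families. The segments lean left inside the box
`(p, b) × (-∞, e)`; each one either spans the gap `(z₁, z₂)` (top at most `z₁`, foot right of
`z₂`) or starts right of `z₂`, so that the spanning segments are exactly those pierced by a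
vertical line in the gap. Left of `z₂` all segments are higher than `c`. -/
structure Layout (p b c e : ℝ) (l : List Seg) (z₁ z₂ : ℝ) : Prop where
  left_lt : p < z₁
  gap : z₁ < z₂
  lt_right : z₂ < b
  shape : ∀ s ∈ l, Attached s ∧ s.2.1 < s.1.1
  subset_box : ∀ s ∈ l, segSet s ⊆ Ioo p b ×ˢ Iio e
  high : ∀ s ∈ l, ∀ pt ∈ segSet s, pt.1 ≤ z₂ → c < pt.2
  spans_or_right : ∀ s ∈ l, (s.2.1 ≤ z₁ ∧ z₂ < s.1.1) ∨ z₂ < s.2.1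
  nodup : l.Nodup
  disjoint : ∀ s ∈ l, ∀ t ∈ l, s ≠ t → s.2.1 ≤ z₁ → t.2.1 ≤ z₁ →
    Disjoint (segSet s) (segSet t)
  triangleFree : TriangleFree l

variable {p b c e p' c' e' p₁ b₁ c₁ e₁ p₂ b₂ c₂ e₂ x₀ z₁ z₂ w₁ w₂ : ℝ} {l l₁ l₂ : List Seg}

lemma Layout.nil (hp : p < z₁) (hz : z₁ < z₂) (hb : z₂ < b) : Layout p b c e [] z₁ z₂ :=
  ⟨hp, hz, hb, by simp, by simp, by simp, by simp, List.nodup_nil, by simp, by simp [TriangleFree]⟩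

lemma Layout.pierces_iff (h : Layout p b c e l z₁ z₂) {s : Seg} (hs : s ∈ l) {v : ℝ}
    (hv : v ∈ Ioo z₁ z₂) : Pierces v s ↔ s.2.1 ≤ z₁ := by
  rw [AttachedSegments.pierces_iff (h.shape s hs).2]
  rcases h.spans_or_right s hs with ⟨hs₁, hs₂⟩ | hs₂
  · exact iff_of_true ⟨by linarith [hv.1], by linarith [hv.2]⟩ hs₁
  · exact iff_of_false (fun hv' => by linarith [hv.2, hv'.1]) (by linarith [h.gap])

lemma Layout.lt_fst_of_mem_segSet (h : Layout p b c e l z₁ z₂) {s : Seg} (hs : s ∈ l)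
    (hright : z₂ < s.2.1) {pt : ℝ × ℝ} (hpt : pt ∈ segSet s) : z₂ < pt.1 :=
  hright.trans_le ((mem_segSet_iff (h.shape s hs).1.1 (h.shape s hs).2).1 hpt).1.1

lemma Layout.append (h₁ : Layout p₁ b₁ c₁ e₁ l₁ z₁ z₂) (h₂ : Layout p₂ b₂ c₂ e₂ l₂ w₁ w₂)
    (hp : z₁ ≤ p₂) (hb : b₂ ≤ z₂) (hc : c₂ ≤ c₁) (he : e₂ ≤ e₁) (hsep : e₂ ≤ c₁) :
    Layout p₁ b₁ c₂ e₁ (l₁ ++ l₂) w₁ w₂ := by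
  have hw₁ : z₁ < w₁ := hp.trans_lt h₂.left_lt
  have hw₂ : w₂ < z₂ := h₂.lt_right.trans_le hb
  have cross : ∀ s ∈ l₁, ∀ t ∈ l₂, Disjoint (segSet s) (segSet t) := by
    refine fun s hs t ht => Set.disjoint_left.2 fun pt hps hpt => ?_
    obtain ⟨⟨-, hx⟩, hy⟩ := h₂.subset_box t ht hpt
    have := h₁.high s hs pt hps (by linarith)
    exact absurd hy (by simp only [mem_Iio]; linarith)
  have spans₁ : ∀ s ∈ l₁, s.2.1 ≤ w₁ → s.2.1 ≤ z₁ := fun s hs hw =>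
    (h₁.spans_or_right s hs).elim (·.1) fun hs' => by linarith [h₂.gap]
  refine ⟨by linarith [h₁.left_lt], h₂.gap, by linarith [h₁.lt_right], ?_, ?_, ?_, ?_, ?_, ?_,
    h₁.triangleFree.append h₂.triangleFree cross⟩
  · simp only [List.mem_append]
    exact fun s hs => hs.elim (h₁.shape s) (h₂.shape s)
  · simp only [List.mem_append]
    refine fun s hs => hs.elim (h₁.subset_box s) fun hs => (h₂.subset_box s hs).trans ?_
    exact prod_mono (Ioo_subset_Ioo (by linarith [h₁.left_lt]) (by linarith [h₁.lt_right]))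
      (Iio_subset_Iio he)
  · simp only [List.mem_append]
    rintro s (hs | hs) pt hpt hx
    · linarith [h₁.high s hs pt hpt (by linarith)]
    · exact h₂.high s hs pt hpt hx
  · simp only [List.mem_append]
    rintro s (hs | hs)
    · rcases h₁.spans_or_right s hs with ⟨hs₁, hs₂⟩ | hs₂
      · exact Or.inl ⟨by linarith, by linarith⟩
      · exact Or.inr (by linarith)
    · exact h₂.spans_or_right s hs
  · exact List.nodup_append.2 ⟨h₁.nodup, h₂.nodup, fun s hs t ht hst =>
      (cross s hs t ht).ne_of_mem (left_mem_segment ℝ _ _) (hst ▸ left_mem_segment ℝ _ _) rfl⟩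
  · simp only [List.mem_append]
    rintro s (hs | hs) t (ht | ht) hst hsw htw
    · exact h₁.disjoint s hs t ht hst (spans₁ s hs hsw) (spans₁ t ht htw)
    · exact cross s hs t ht
    · exact (cross t ht s hs).symm
    · exact h₂.disjoint s hs t ht hst hsw htw

lemma Layout.inter_blocker_nonempty (h : Layout p b c e l z₁ z₂) (hx₀ : x₀ < p) {s : Seg}
    (hs : s ∈ l) (hspan : s.2.1 ≤ z₁) : (segSet s ∩ segSet (blocker x₀ z₁ z₂ e)).Nonempty := by
  obtain ⟨hatt, hlt⟩ := h.shape s hs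
  obtain ⟨⟨htop, -⟩, hhigh⟩ := h.subset_box s hs (right_mem_segment ℝ _ _)
  have hfoot : z₂ < s.1.1 := by
    rcases h.spans_or_right s hs with ⟨-, hfoot⟩ | hright
    · exact hfoot
    · linarith [h.gap]
  refine segSet_inter_nonempty hatt rfl hlt (by simp only [blocker]; linarith)
    (by simp only [blocker]; linarith [h.gap]) (by simp only [blocker]; linarith) ?_
  exact hhigh.trans_le (le_heightAt_blocker (by linarith [h.gap, h.left_lt]) h.gap
    (by linarith [hatt.2, mem_Iio.1 hhigh]) hspan)

lemma Layout.append_blocker (h : Layout p b c e l z₁ z₂) (hp' : p' < x₀) (hx₀ : x₀ < p)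
    (he : 0 < e) (hc' : c' < e) (he' : e * (z₂ - x₀) / (z₂ - z₁) < e') :
    Layout p' b c' e' (l ++ [blocker x₀ z₁ z₂ e]) x₀ p := by
  have hz := h.gap
  have hpz := h.left_lt
  have hzb := h.lt_right
  set d := blocker x₀ z₁ z₂ e
  have hlt : d.2.1 < d.1.1 := by simp only [d, blocker]; linarith
  have hde : e ≤ d.2.2 := by
    rw [← heightAt_top hlt]
    exact le_heightAt_blocker (by linarith) hz he.le (by simp only [d, blocker]; linarith)
  have hde' : d.2.2 < e' := he'
  have hd : Attached d ∧ d.2.1 < d.1.1 := ⟨⟨rfl, by linarith⟩, hlt⟩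
  have hpt : ∀ s ∈ l, p < s.2.1 := fun s hs => (h.subset_box s hs (right_mem_segment ℝ _ _)).1.1
  have hd_notMem : d ∉ l := fun hdl => by
    rcases h.spans_or_right d hdl with ⟨-, hfoot⟩ | hright
    · exact hfoot.ne rfl
    · exact absurd hright (by simp only [d, blocker]; linarith)
  have spans_of_meets : ∀ s ∈ l, (segSet s ∩ segSet d).Nonempty → s.2.1 ≤ z₁ := by
    rintro s hs ⟨pt, hps, hpd⟩
    refine ((h.spans_or_right s hs).resolve_right fun hright => ?_).1
    have hfoot : pt.1 ≤ z₂ := ((mem_segSet_iff hd.1.1 hlt).1 hpd).1.2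
    linarith [h.lt_fst_of_mem_segSet hs hright hps]
  have mem : ∀ s ∈ l ++ [d], s ∈ l ∨ s = d := by simp
  refine ⟨hp', hx₀, by linarith, ?_, ?_, ?_, ?_, ?_, ?_, ?_⟩
  · intro s hs; rcases mem s hs with hs | rfl
    exacts [h.shape s hs, hd]
  · intro s hs; rcases mem s hs with hs | rfl
    · exact (h.subset_box s hs).trans (prod_mono (Ioo_subset_Ioo (by linarith) le_rfl)
        (Iio_subset_Iio (hde.trans hde'.le)))
    · exact ((convex_Ioo p' b).prod (convex_Iio e')).segment_subset
        ⟨⟨by simp only [d, blocker]; linarith, by simp only [d, blocker]; linarith⟩,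
          show (0 : ℝ) < e' by linarith⟩
        ⟨⟨by simp only [d, blocker]; linarith, by simp only [d, blocker]; linarith⟩, hde'⟩
  · intro s hs pt hpt hx; rcases mem s hs with hs | rfl
    · linarith [(h.subset_box s hs hpt).1.1]
    · rw [((mem_segSet_iff hd.1.1 hd.2).1 hpt).2]
      exact hc'.trans_le (le_heightAt_blocker (by linarith) hz he.le (by linarith))
  · intro s hs; rcases mem s hs with hs | rfl
    · exact Or.inr (hpt s hs)
    · exact Or.inl ⟨le_rfl, by simp only [d, blocker]; linarith⟩
  · refine List.nodup_append.2 ⟨h.nodup, List.nodup_singleton _, fun s hs t ht hst => ?_⟩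
    rw [List.mem_singleton] at ht
    exact hd_notMem (ht ▸ hst ▸ hs)
  · intro s hs t ht
    rcases mem s hs with hs | rfl <;> rcases mem t ht with ht | rfl <;> intro hst hs₀ ht₀
    · linarith [hpt s hs]
    · linarith [hpt s hs]
    · linarith [hpt t ht]
    · exact absurd rfl hst
  · refine h.triangleFree.concat fun s hs t ht hst hsd htd => h.disjoint s hs t ht hst ?_ ?_
    exacts [spans_of_meets s hs hsd, spans_of_meets t ht htd]

end Layout

section Family

/-- A bound `Q`, for `k` colours, on the ratio of the widths of box and gap and on `e / c`. The
first copy of the recursion lives at heights `2 Q² c .. e`, whence `2 Q³`; the gap shrinks by at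
most a factor `2 Q`. -/
noncomputable def scaleFactor : ℕ → ℝ
  | 0 => 2
  | k + 1 => 2 * scaleFactor k ^ 3

lemma two_le_scaleFactor : ∀ k, 2 ≤ scaleFactor k
  | 0 => le_rfl
  | k + 1 => by
    have := two_le_scaleFactor k
    simp only [scaleFactor]
    nlinarith [pow_le_pow_left₀ zero_le_two this 3]

structure Family (A : List Seg → ℕ) (k : ℕ) (pre : List Seg) (p b c e : ℝ) (l : List Seg)
    (z₁ z₂ : ℝ) : Prop extends Layout p b c e l z₁ z₂ where
  width_le : b - p ≤ scaleFactor k * (z₂ - z₁)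
  le_ncard_colorsOn : k ≤ (colorsOn A pre l (·.2.1 ≤ z₁)).ncard

lemma succ_le_ncard_of_insert_subset {α : Type*} {X Y : Set α} {k : ℕ} {γ : α}
    (hX : k ≤ X.ncard) (hγ : γ ∉ X) (hXY : insert γ X ⊆ Y) (hY : Y.Finite) :
    k + 1 ≤ Y.ncard :=
  calc k + 1 ≤ (insert γ X).ncard := by
        rw [ncard_insert_of_notMem hγ (hY.subset ((subset_insert _ _).trans hXY))]; omega
    _ ≤ Y.ncard := ncard_le_ncard hXY hY

variable {A : List Seg → ℕ} {k : ℕ} {pre l₁ l₂ : List Seg} {p b c e z₁ z₂ y₁ y₂ : ℝ}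

/-- The height levels of the recursion: the second copy at `c .. Q c`, the first at
`2 Q² c .. e`. -/
lemma heights_lt (hc : 0 < c) (he : c * scaleFactor (k + 1) ≤ e) :
    c < scaleFactor k * c ∧ scaleFactor k * c < 2 * scaleFactor k ^ 2 * c ∧
      2 * scaleFactor k ^ 2 * c * scaleFactor k ≤ e := by
  have hQ := two_le_scaleFactor k
  have hQc : 0 < scaleFactor k ^ 3 * c := by positivity
  simp only [scaleFactor] at he
  refine ⟨by nlinarith, mul_lt_mul_of_pos_right (by nlinarith) hc, by nlinarith⟩

lemma family_zero (hpb : p < b) :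
    Family A 0 pre p b c e [] (p + (b - p) / 4) (p + 3 * (b - p) / 4) where
  toLayout := .nil (by linarith) (by linarith) (by linarith)
  width_le := by simp only [scaleFactor]; linarith
  le_ncard_colorsOn := Nat.zero_le _

lemma Family.append_of_not_subset
    (h₁ : Family A k pre p b (2 * scaleFactor k ^ 2 * c) e l₁ z₁ z₂)
    (h₂ : Family A k (pre ++ l₁) (z₁ + (z₂ - z₁) / 2) z₂ c (scaleFactor k * c) l₂ y₁ y₂)
    (hc : 0 < c) (he : c * scaleFactor (k + 1) ≤ e)
    (hsub : ¬ colorsOn A pre l₁ (·.2.1 ≤ z₁) ⊆ colorsOn A (pre ++ l₁) l₂ (·.2.1 ≤ y₁)) :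
    Family A (k + 1) pre p b c e (l₁ ++ l₂) y₁ y₂ := by
  obtain ⟨hc₁, hc₂, he₁⟩ := heights_lt hc he
  set Q := scaleFactor k
  have hQ : 2 ≤ Q := two_le_scaleFactor k
  have hz := h₁.gap
  have hy := h₂.gap
  have hzy := h₂.left_lt
  obtain ⟨γ, hγ₁, hγ₂⟩ := Set.not_subset.1 hsub
  refine ⟨h₁.toLayout.append h₂.toLayout (by linarith) le_rfl (by linarith) (by nlinarith)
    hc₂.le, ?_, ?_⟩
  · calc b - p ≤ Q * (z₂ - z₁) := h₁.width_le
      _ ≤ Q * (2 * Q * (y₂ - y₁)) := by gcongr; linarith [h₂.width_le]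
      _ = 2 * Q ^ 2 * (y₂ - y₁) := by ring
      _ ≤ 2 * Q ^ 3 * (y₂ - y₁) := by gcongr <;> linarith
  · refine succ_le_ncard_of_insert_subset h₂.le_ncard_colorsOn hγ₂
      (insert_subset ?_ colorsOn_append_right) colorsOn_finite
    exact colorsOn_mono (fun s _ hs => hs.trans (by linarith)) (colorsOn_append_left hγ₁)

lemma Family.append_blocker_of_subset (hA : ProperOnline A)
    (h₁ : Family A k pre p b (2 * scaleFactor k ^ 2 * c) e l₁ z₁ z₂)
    (h₂ : Family A k (pre ++ l₁) (z₁ + (z₂ - z₁) / 2) z₂ c (scaleFactor k * c) l₂ y₁ y₂)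
    (hc : 0 < c) (he : c * scaleFactor (k + 1) ≤ e)
    (hsub : colorsOn A pre l₁ (·.2.1 ≤ z₁) ⊆ colorsOn A (pre ++ l₁) l₂ (·.2.1 ≤ y₁)) :
    Family A (k + 1) pre p b c e
      (l₁ ++ (l₂ ++ [blocker (z₁ + (z₂ - z₁) / 4) y₁ y₂ (scaleFactor k * c)]))
      (z₁ + (z₂ - z₁) / 4) (z₁ + (z₂ - z₁) / 2) := by
  obtain ⟨hc₂, hc₁, he₁⟩ := heights_lt hc he
  set Q := scaleFactor k
  have hQ : 2 ≤ Q := two_le_scaleFactor k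
  have hz := h₁.gap
  have hy := h₂.gap
  have hzy := h₂.left_lt
  have hyz := h₂.lt_right
  set x₀ := z₁ + (z₂ - z₁) / 4 with hx₀
  set d := blocker x₀ y₁ y₂ (Q * c)
  have hd : Q * c * (y₂ - x₀) / (y₂ - y₁) < 2 * Q ^ 2 * c := by
    have hw : y₂ - x₀ < 2 * Q * (y₂ - y₁) := by linarith [h₂.width_le]
    rw [div_lt_iff₀ (by linarith)]
    nlinarith [mul_lt_mul_of_pos_left hw (by positivity : 0 < Q * c)]
  have hγ₂ : A (pre ++ l₁ ++ l₂ ++ [d]) ∉ colorsOn A (pre ++ l₁) l₂ (·.2.1 ≤ y₁) :=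
    notMem_colorsOn hA fun s hs hspan => h₂.inter_blocker_nonempty (by linarith) hs hspan
  refine ⟨h₁.toLayout.append (h₂.toLayout.append_blocker (by linarith) (by linarith)
    (by positivity) hc₂ hd) le_rfl le_rfl (by linarith) (by nlinarith) le_rfl, ?_, ?_⟩
  · calc b - p ≤ Q * (z₂ - z₁) := h₁.width_le
      _ = 4 * Q * (z₁ + (z₂ - z₁) / 2 - x₀) := by ring
      _ ≤ 2 * Q ^ 3 * (z₁ + (z₂ - z₁) / 2 - x₀) :=
        mul_le_mul_of_nonneg_right (by nlinarith) (by linarith)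
  · refine succ_le_ncard_of_insert_subset h₁.le_ncard_colorsOn (fun h => hγ₂ (hsub h))
      (insert_subset ?_ ?_) colorsOn_finite
    · simpa only [List.append_assoc] using
        mem_colorsOn_concat (A := A) (pre := pre) (l := l₁ ++ l₂) (P := (·.2.1 ≤ x₀)) le_rfl
    · exact colorsOn_append_left.trans
        (colorsOn_mono fun s _ (hs : s.2.1 ≤ z₁) => hs.trans (by linarith))

theorem exists_family (hA : ProperOnline A) (k : ℕ) (pre : List Seg) {p b c e : ℝ}
    (hpb : p < b) (hc : 0 < c) (he : c * scaleFactor k ≤ e) :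
    ∃ l z₁ z₂, Family A k pre p b c e l z₁ z₂ := by
  induction k generalizing pre p b c e with
  | zero => exact ⟨[], _, _, family_zero hpb⟩
  | succ k ih =>
    obtain ⟨hc₂, hc₁, he₁⟩ := heights_lt hc he
    obtain ⟨l₁, z₁, z₂, h₁⟩ := ih pre hpb (by linarith) he₁
    obtain ⟨l₂, y₁, y₂, h₂⟩ := ih (pre ++ l₁) (p := z₁ + (z₂ - z₁) / 2) (b := z₂)
      (by linarith [h₁.gap]) hc (mul_comm _ _).le
    by_cases hsub : colorsOn A pre l₁ (·.2.1 ≤ z₁) ⊆ colorsOn A (pre ++ l₁) l₂ (·.2.1 ≤ y₁)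
    · exact ⟨_, _, _, h₁.append_blocker_of_subset hA h₂ hc he hsub⟩
    · exact ⟨_, _, _, h₁.append_of_not_subset h₂ hc he hsub⟩

end Family

end AttachedSegments

open AttachedSegments in
/-- Adversary lower bound for segments attached to a line. For every
proper on-line coloring algorithm A and every k there is a finite sequence of segments
attached to the line, with no three pairwise intersecting segments (ω ≤ 2), and a
vertical line v such that: (1) any two segments pierced by v are disjoint, (2) every
pierced segment is attached strictly to the right of v, and (3) A uses at least k
distinct colors on the pierced segments. -/
theorem stmt11 (A : List Seg → ℕ) (hA : ProperOnline A) (k : ℕ) :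
    ∃ l : List Seg,
      (∀ s ∈ l, Attached s) ∧
      (∀ i j m : Fin l.length, i ≠ j → i ≠ m → j ≠ m →
        ¬ ((segSet (l.get i) ∩ segSet (l.get j)).Nonempty ∧
           (segSet (l.get i) ∩ segSet (l.get m)).Nonempty ∧
           (segSet (l.get j) ∩ segSet (l.get m)).Nonempty)) ∧
      ∃ v : ℝ,
        (∀ i j : Fin l.length, i ≠ j → Pierces v (l.get i) → Pierces v (l.get j) →
          Disjoint (segSet (l.get i)) (segSet (l.get j))) ∧
        (∀ i : Fin l.length, Pierces v (l.get i) → v < (l.get i).1.1) ∧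
        k ≤ {c : ℕ | ∃ i : Fin l.length, Pierces v (l.get i) ∧
              A (l.take ((i : ℕ) + 1)) = c}.ncard := by
  obtain ⟨l, z₁, z₂, h⟩ := exists_family hA k [] zero_lt_one zero_lt_one (one_mul _).le
  have hv : (z₁ + z₂) / 2 ∈ Ioo z₁ z₂ := ⟨by linarith [h.gap], by linarith [h.gap]⟩
  have hne : ∀ i j : Fin l.length, i ≠ j → l.get i ≠ l.get j := fun i j hij =>
    mt h.nodup.get_inj_iff.1 hij
  have hspan : ∀ i, Pierces ((z₁ + z₂) / 2) (l.get i) ↔ (l.get i).2.1 ≤ z₁ := fun i =>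
    h.pierces_iff (l.get_mem i) hv
  refine ⟨l, fun s hs => (h.shape s hs).1, fun i j m hij him hjm => ?_, (z₁ + z₂) / 2,
    fun i j hij hi hj => ?_, fun i hi => ?_, ?_⟩
  · exact h.triangleFree _ (l.get_mem i) _ (l.get_mem j) _ (l.get_mem m)
      (hne i j hij) (hne i m him) (hne j m hjm)
  · exact h.disjoint _ (l.get_mem i) _ (l.get_mem j) (hne i j hij) ((hspan i).1 hi)
      ((hspan j).1 hj)
  · exact ((pierces_iff (h.shape _ (l.get_mem i)).2).1 hi).2
  · rw [← colorsOn_nil]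
    exact h.le_ncard_colorsOn.trans (ncard_le_ncard
      (colorsOn_mono fun s hs hs₁ => (h.pierces_iff hs hv).2 hs₁) colorsOn_finite)
end

section
/- Inductive step of the adversary lower bound: suppose after two plays the algorithm has used color sets C₁ on the pairwise-disjoint segments V₁ pierced by vertical line v₁ and C₂ on the pairwise-disjoint segments V₂ pierced by vertical line v₂, with |C₁| ≥ k−1 and |C₂| ≥ k−1, where v₂ also pierces all of V₁ (and nothing else from the first family). If |C₁ ∪ C₂| ≥ k then v₂ witnesses k colors on pierced segments; otherwise C₁ = C₂ and the extra segment d, which intersects every segment of V₁ (hence must receive a color outside C₁), makes v₁ pierce the pairwise-disjoint family V₁ ∪ {d} carrying at least k distinct colors. -/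
/-- Inductive step of the adversary lower bound. Let col be a proper
coloring with respect to the intersection relation I, let C₁ be the set of colors on
V₁ and C₂ a set of colors, both of size at least k − 1, and let d intersect every
element of V₁. Then either C₁ ∪ C₂ already has at least k colors, or C₁ = C₂ and the
colors on V₁ ∪ {d} number at least k (since d's color lies outside C₁). -/
theorem stmt12 {α : Type*} [DecidableEq α] (k : ℕ) (I : α → α → Prop)
    (col : α → ℕ) (hproper : ∀ a b, I a b → col a ≠ col b)
    (V₁ : Finset α) (d : α) (hd : ∀ s ∈ V₁, I d s)
    (C₂ : Finset ℕ)
    (h₁ : k - 1 ≤ (V₁.image col).card) (h₂ : k - 1 ≤ C₂.card) :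
    k ≤ ((V₁.image col) ∪ C₂).card ∨
    (V₁.image col = C₂ ∧ k ≤ ((insert d V₁).image col).card) := by
  by_cases hk : k ≤ ((V₁.image col) ∪ C₂).card
  · exact Or.inl hk
  · push_neg at hk
    rcases Nat.eq_zero_or_pos k with rfl | hkpos
    · exact Or.inl (Nat.zero_le _)
    right
    have hu : ((V₁.image col) ∪ C₂).card ≤ k - 1 := by omega
    have hsub1 : V₁.image col ⊆ (V₁.image col) ∪ C₂ := Finset.subset_union_left
    have hsub2 : C₂ ⊆ (V₁.image col) ∪ C₂ := Finset.subset_union_right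
    have e1 : V₁.image col = (V₁.image col) ∪ C₂ :=
      Finset.eq_of_subset_of_card_le hsub1
        (le_trans hu h₁)
    have e2 : C₂ = (V₁.image col) ∪ C₂ :=
      Finset.eq_of_subset_of_card_le hsub2 (le_trans hu h₂)
    refine ⟨e1.trans e2.symm, ?_⟩
    have hnot : col d ∉ V₁.image col := by
      simp only [Finset.mem_image, not_exists]
      rintro s ⟨hs, hcol⟩
      exact hproper d s (hd s hs) hcol.symm
    have : (insert d V₁).image col = insert (col d) (V₁.image col) := by
      simp [Finset.image_insert]
    rw [this, Finset.card_insert_of_notMem hnot]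
    omega
end

section
/- If u₁ and u₂ are disjoint quasi-convex sets spanned between two lines whose base segments are disjoint with base(u₁) left of base(u₂), then u₁ lies entirely to the left of the base segment of u₂ (every point of u₁ at height t has x-coordinate less than that of base(u₂) at height t). Symmetrically for 'right'. -/
open Set

/-- If u₁ and u₂ are disjoint quasi-convex sets spanned between two
lines whose base segments are disjoint with base(u₁) left of base(u₂) (at every
height), then u₁ lies entirely to the left of the base segment of u₂: every point of
u₁ at height t has x-coordinate smaller than that of base(u₂) at height t. -/
theorem stmt15 (u₁ u₂ : Set (ℝ × ℝ)) (a₁ b₁ a₂ b₂ : ℝ)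
    (hconn : IsConnected u₁)
    (hs₁ : u₁ ⊆ Strip) (hs₂ : u₂ ⊆ Strip)
    (hb₁ : BaseSeg a₁ b₁ ⊆ u₁) (hb₂ : BaseSeg a₂ b₂ ⊆ u₂)
    (hdisj : Disjoint u₁ u₂)
    (horder : ∀ t ∈ Icc (0:ℝ) 1, baseFun a₁ b₁ t < baseFun a₂ b₂ t) :
    ∀ p ∈ u₁, p.1 < baseFun a₂ b₂ p.2 := by
  intro p hp
  by_contra hlt
  push_neg at hlt
  set f : ℝ × ℝ → ℝ := fun q => q.1 - baseFun a₂ b₂ q.2 with hf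
  have hfc : Continuous f := by
    simp only [hf, baseFun]
    fun_prop
  have hne : ∀ q ∈ u₁, f q ≠ 0 := by
    intro q hq h0
    have hsq := hs₁ hq
    have hmem : q ∈ BaseSeg a₂ b₂ := by
      refine ⟨q.2, ⟨hsq.1, hsq.2⟩, ?_⟩
      have : q.1 = baseFun a₂ b₂ q.2 := by
        have := h0
        simp only [hf] at this
        linarith
      exact Prod.ext this rfl
    exact (hdisj.ne_of_mem hq (hb₂ hmem)) rfl
  have hq0 : ((a₁, (0:ℝ)) : ℝ × ℝ) ∈ u₁ := by
    apply hb₁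
    exact ⟨0, ⟨le_refl _, zero_le_one⟩, by simp [baseFun]⟩
  have hneg : f (a₁, 0) < 0 := by
    have h := horder 0 ⟨le_refl _, zero_le_one⟩
    simp only [hf, baseFun] at h ⊢
    simp at h ⊢
    linarith
  have hfp : 0 < f p := by
    rcases lt_or_eq_of_le (show (0:ℝ) ≤ f p by simp only [hf]; linarith) with h | h
    · exact h
    · exact absurd h.symm (hne p hp)
  have hsub : Icc (f (a₁, 0)) (f p) ⊆ f '' u₁ :=
    hconn.isPreconnected.intermediate_value hq0 hp (hfc.continuousOn)
  obtain ⟨q, hq, hq0'⟩ := hsub ⟨le_of_lt hneg, le_of_lt hfp⟩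
  exact hne q hq hq0'
end

section
/- Bounded-degree consequence for translates: if G is the intersection graph of finitely many translates of a fixed compact convex set in the plane with clique number ω(G) ≥ 2, then the maximum degree of G is at most 6ω(G) − 7, and hence the greedy (First-Fit-style) algorithm that introduces a new color only when forced uses at most 6ω(G) − 6 colors on-line. -/
/-!
Fix a vertex and let `D = K - K`, a compact convex centrally symmetric set. Two translates meet
iff the difference of their translation vectors lies in `D`, so, seen from the fixed vertex, its
closed neighbourhood is a family of points of `D`, one of them at `0`, and a subfamily is a clique
iff its pairwise differences lie in `D`.

If these points are collinear, the two closed rays from `0` split them into two cliques that both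
contain the vertex, so the degree is at most `2ω - 2`. Otherwise `D` is a convex body and its
gauge is a norm. Let `r • u`, with `gauge D u = 1`, be a neighbour of maximal norm `r`, and
inscribe in the unit sphere the affine-regular hexagon `u, v, v - u, -u, -v, u - v`. In each of
the six sectors between consecutive vertices, points of norm at most `1` are at distance at most
`1`, so every sector is a clique. The vertex lies in all six sectors and `r • u` in two of them,
hence `(deg + 1) + 5 + 1 ≤ 6ω`. A greedy colouring uses at most `deg + 1` colours.
-/

open Set

/-- The intersection graph of the translates K + tr i of a fixed set K. -/
def translatesGraph {n : ℕ} (K : Set (ℝ × ℝ)) (tr : Fin n → ℝ × ℝ) :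
    SimpleGraph (Fin n) :=
  SimpleGraph.fromRel
    (fun i j => (((fun p => p + tr i) '' K) ∩ ((fun p => p + tr j) '' K)).Nonempty)

open Module Pointwise Topology

lemma exists_mem_Icc_mul_eq {a b : ℝ} (hb : 0 ≤ b) (hba : b ≤ a) :
    ∃ t ∈ Icc (0 : ℝ) 1, t * a = b :=
  ⟨b / a, ⟨div_nonneg hb (hb.trans hba), div_le_one_of_le₀ hba (hb.trans hba)⟩,
    div_mul_cancel_of_imp fun ha => le_antisymm (ha ▸ hba) hb⟩

lemma neg_mem_sub_self {G : Type*} [AddGroup G] {K : Set G} {z : G} (hz : z ∈ K - K) :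
    -z ∈ K - K := by
  obtain ⟨p, hp, q, hq, rfl⟩ := hz
  exact ⟨q, hq, p, hp, (neg_sub p q).symm⟩

section Convex

variable {E : Type*} [AddCommGroup E] [Module ℝ E] {D : Set E}

lemma Convex.smul_mem_of_le (hD : Convex ℝ D) (h0 : 0 ∈ D) {p : E} {a b : ℝ}
    (hp : a • p ∈ D) (hb : 0 ≤ b) (hba : b ≤ a) : b • p ∈ D := by
  obtain ⟨t, ht, rfl⟩ := exists_mem_Icc_mul_eq hb hba
  rw [mul_smul]
  exact hD.smul_mem_of_zero_mem h0 hp ht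

lemma Convex.smul_add_smul_mem_of_le (hD : Convex ℝ D) (h0 : 0 ∈ D) {p q : E}
    {a b a' b' : ℝ} (hp : a • p ∈ D) (hq : b • q ∈ D) (hpq : a • p + b • q ∈ D)
    (ha' : 0 ≤ a') (haa : a' ≤ a) (hb' : 0 ≤ b') (hbb : b' ≤ b) : a' • p + b' • q ∈ D := by
  obtain ⟨s, hs, rfl⟩ := exists_mem_Icc_mul_eq ha' haa
  obtain ⟨t, ht, rfl⟩ := exists_mem_Icc_mul_eq hb' hbb
  have hq' : t • b • q ∈ D := hD.smul_mem_of_zero_mem h0 hq ht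
  have hpq' : t • b • q + a • p ∈ D := by
    rw [add_comm]
    exact hD.add_smul_mem hp hpq ht
  rw [mul_smul, mul_smul, add_comm]
  exact hD.add_smul_mem hq' hpq' hs

lemma Convex.sub_mem_of_smul_mem (hD : Convex ℝ D) (h0 : 0 ∈ D) (hsym : ∀ z ∈ D, -z ∈ D)
    {e : E} {a b : ℝ} (ha : 0 ≤ a) (hb : 0 ≤ b) (hae : a • e ∈ D) (hbe : b • e ∈ D) :
    a • e - b • e ∈ D := by
  wlog hba : b ≤ a generalizing a b
  · rw [← neg_sub]
    exact hsym _ (this hb ha hbe hae (le_of_not_ge hba))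
  rw [← sub_smul]
  exact hD.smul_mem_of_le h0 hae (sub_nonneg.2 hba) (sub_le_self a hb)

lemma le_one_of_smul_add_smul_mem (hD : Convex ℝ D) {p q : E} (hgp : gauge D p = 1)
    (hpq : p - q ∈ D) {a b : ℝ} (ha : 0 ≤ a) (hb : 0 ≤ b) (hx : a • p + b • q ∈ D) :
    a ≤ 1 := by
  have hb1 : 0 < 1 + b := by linarith
  have hmem : ((a + b) / (1 + b)) • p ∈ D := by
    convert hD hx hpq (by positivity : 0 ≤ 1 / (1 + b)) (by positivity : 0 ≤ b / (1 + b))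
      (by field_simp) using 1
    module
  have := gauge_le_one_of_mem hmem
  rw [gauge_smul_of_nonneg (by positivity), hgp, smul_eq_mul, mul_one, div_le_one hb1] at this
  linarith

def sector (p q : E) : Set E := {z | ∃ a b : ℝ, 0 ≤ a ∧ 0 ≤ b ∧ a • p + b • q = z}

lemma zero_mem_sector (p q : E) : 0 ∈ sector p q := ⟨0, 0, le_rfl, le_rfl, by simp⟩

lemma smul_mem_sector {p q z : E} (hz : z ∈ sector p q) {c : ℝ} (hc : 0 ≤ c) :
    c • z ∈ sector p q := by
  obtain ⟨a, b, ha, hb, rfl⟩ := hz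
  exact ⟨c * a, c * b, mul_nonneg hc ha, mul_nonneg hc hb, by module⟩

/-- Both points have coordinates at most `1`, so their difference lies in a parallelogram with
vertices in `D`: spanned by `p` and `q` if the coordinates are ordered alike, by `p` and `-q`
otherwise. -/
lemma sub_mem_of_mem_sector (hD : Convex ℝ D) (h0 : 0 ∈ D) (hsym : ∀ z ∈ D, -z ∈ D)
    {p q : E} (hp : p ∈ D) (hq : q ∈ D) (hpq : p - q ∈ D) (hgp : gauge D p = 1)
    (hgq : gauge D q = 1) {x y : E} (hx : x ∈ D) (hy : y ∈ D) (hxs : x ∈ sector p q)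
    (hys : y ∈ sector p q) : x - y ∈ D := by
  obtain ⟨a, b, ha, hb, rfl⟩ := hxs
  obtain ⟨c, d, hc, hd, rfl⟩ := hys
  wlog hca : c ≤ a generalizing a b c d
  · rw [← neg_sub]
    exact hsym _ (this c d hc hd hy a b ha hb hx (le_of_not_ge hca))
  have hqp : q - p ∈ D := by simpa using hsym _ hpq
  have ha1 := le_one_of_smul_add_smul_mem hD hgp hpq ha hb hx
  have hb1 := le_one_of_smul_add_smul_mem hD hgq hqp hb ha (by rwa [add_comm] at hx)
  have hd1 := le_one_of_smul_add_smul_mem hD hgq hqp hd hc (by rwa [add_comm] at hy)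
  rcases le_total d b with hdb | hbd
  · convert hD.smul_add_smul_mem_of_le h0 (hD.smul_mem_of_zero_mem h0 hp ⟨ha, ha1⟩)
      (hD.smul_mem_of_zero_mem h0 hq ⟨hb, hb1⟩) hx (sub_nonneg.2 hca) (sub_le_self a hc)
      (sub_nonneg.2 hdb) (sub_le_self b hd) using 1
    module
  · convert hD.smul_add_smul_mem_of_le h0 (p := p) (q := -q) (a := 1) (b := 1) (a' := a - c)
      (b' := d - b) (by simpa) (by simpa using hsym q hq) (by simpa [← sub_eq_add_neg] using hpq)
      (sub_nonneg.2 hca) (by linarith) (sub_nonneg.2 hbd) (by linarith) using 1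
    module

end Convex

section Hexagon

variable {E : Type*} [AddCommGroup E] [Module ℝ E]

/-- Consecutive vertices satisfy `w (k + 1) - w k = w (k + 2)`. -/
def hexagon (u v : E) : Fin 6 → E := ![u, v, v - u, -u, -v, u - v]

lemma gauge_hexagon {D : Set E} (hsym : ∀ z ∈ D, -z ∈ D) {u v : E} (hu : gauge D u = 1)
    (hv : gauge D v = 1) (hvu : gauge D (v - u) = 1) (k : Fin 6) :
    gauge D (hexagon u v k) = 1 ∧ gauge D (hexagon u v k - hexagon u v (k + 1)) = 1 := by
  have huv : gauge D (u - v) = 1 := by rw [← neg_sub, gauge_neg hsym, hvu]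
  fin_cases k <;>
    simp [hexagon, gauge_neg hsym, hu, hv, hvu, huv, neg_add_eq_sub, sub_sub_eq_add_sub]

lemma exists_mem_sector_hexagon {u v : E} (hspan : ∀ z : E, ∃ a b : ℝ, a • u + b • v = z)
    (z : E) : ∃ k : Fin 6, z ∈ sector (hexagon u v k) (hexagon u v (k + 1)) := by
  obtain ⟨a, b, rfl⟩ := hspan z
  rcases le_total 0 a with ha | ha <;> rcases le_total 0 b with hb | hb
  · exact ⟨0, a, b, ha, hb, by simp [hexagon]⟩
  · rcases le_total 0 (a + b) with hab | hab
    · exact ⟨5, -b, a + b, by linarith, hab, by simp [hexagon]; module⟩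
    · exact ⟨4, -(a + b), a, by linarith, ha, by simp [hexagon]; module⟩
  · rcases le_total 0 (a + b) with hab | hab
    · exact ⟨1, a + b, -a, hab, by linarith, by simp [hexagon]; module⟩
    · exact ⟨2, b, -(a + b), hb, by linarith, by simp [hexagon]; module⟩
  · exact ⟨3, -a, -b, by linarith, by linarith, by simp [hexagon]⟩

end Hexagon

section Normed

variable {E : Type*} [NormedAddCommGroup E] [NormedSpace ℝ E]

lemma exists_mem_Ioo_gauge_sub_eq_one {D : Set E} (hD : Convex ℝ D) (hD0 : D ∈ 𝓝 0)
    (hsym : ∀ z ∈ D, -z ∈ D) {u : E} (hu : gauge D u = 1) {w : ℝ → E} (hw : Continuous w)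
    (hw0 : w 0 = u) (hw2 : w 2 = -u) : ∃ θ ∈ Ioo (0 : ℝ) 2, gauge D (w θ - u) = 1 := by
  have hcont : Continuous fun t => gauge D (w t - u) :=
    (continuous_gauge hD hD0).comp (hw.sub continuous_const)
  have hg0 : gauge D (w 0 - u) = 0 := by simp [hw0]
  have hg2 : gauge D (w 2 - u) = 2 := by
    rw [hw2, show -u - u = -((2 : ℝ) • u) by module, gauge_neg hsym,
      gauge_smul_of_nonneg zero_le_two, hu, smul_eq_mul, mul_one]
  obtain ⟨θ, hθ, hθ1⟩ := intermediate_value_Icc zero_le_two hcont.continuousOn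
    (show (1 : ℝ) ∈ Icc _ _ by rw [hg0, hg2]; norm_num)
  refine ⟨θ, ⟨lt_of_le_of_ne hθ.1 ?_, lt_of_le_of_ne hθ.2 ?_⟩, hθ1⟩ <;>
    rintro rfl <;> simp_all

lemma exists_hexagon (hE : finrank ℝ E = 2) {D : Set E} (hD : Convex ℝ D) (hD0 : D ∈ 𝓝 0)
    (hDb : Bornology.IsBounded D) (hsym : ∀ z ∈ D, -z ∈ D) {u : E} (hu : gauge D u = 1) :
    ∃ v : E, gauge D v = 1 ∧ gauge D (v - u) = 1 ∧ LinearIndependent ℝ ![u, v] := by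
  have hu0 : u ≠ 0 := by
    rintro rfl
    simp at hu
  obtain ⟨e, he⟩ := exists_linearIndependent_pair_of_one_lt_finrank (R := ℝ) (by omega) hu0
  -- a path from `u` to `-u` off the line `ℝ • u`, then pushed onto the unit sphere of the gauge
  set c : ℝ → E := fun t => (1 - t) • u + (t * (2 - t)) • e with hc_def
  have hc : ∀ t, c t ≠ 0 := by
    intro t h
    obtain ⟨h1, h2⟩ := LinearIndependent.pair_iff.1 he _ _ h
    obtain rfl : t = 1 := by linarith
    norm_num at h2
  have hgc : ∀ t, 0 < gauge D (c t) := fun t =>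
    (gauge_pos (absorbent_nhds_zero hD0) ((NormedSpace.isVonNBounded_iff ℝ).2 hDb)).2 (hc t)
  set w : ℝ → E := fun t => (gauge D (c t))⁻¹ • c t with hw_def
  have hwc : Continuous w :=
    (((continuous_gauge hD hD0).comp (by fun_prop)).inv₀ fun t => (hgc t).ne').smul
      (by fun_prop)
  obtain ⟨θ, ⟨hθ0, hθ2⟩, hθ1⟩ := exists_mem_Ioo_gauge_sub_eq_one hD hD0 hsym hu hwc
    (by simp [hw_def, hc_def, hu]) (by norm_num [hw_def, hc_def, gauge_neg hsym, hu])
  set g := (gauge D (c θ))⁻¹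
  have hwθ : w θ = (g * (1 - θ)) • u + (g * (θ * (2 - θ))) • e := by
    rw [hw_def, hc_def]
    module
  refine ⟨w θ, ?_, hθ1, ?_⟩
  · rw [hw_def, gauge_smul_of_nonneg (inv_nonneg.2 (hgc θ).le), smul_eq_mul,
      inv_mul_cancel₀ (hgc θ).ne']
  have hg : 0 < g := inv_pos.2 (hgc θ)
  simpa [hwθ] using LinearIndependent.pair_add_smul_add_smul_iff (x := u) (y := e) 1 0
    (g * (1 - θ)) (g * (θ * (2 - θ))) |>.2
    ⟨he, by simpa using (mul_pos hg (mul_pos hθ0 (sub_pos.2 hθ2))).ne'⟩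

lemma LinearIndependent.exists_smul_add_smul_eq (hE : finrank ℝ E = 2) {u v : E}
    (h : LinearIndependent ℝ ![u, v]) (z : E) : ∃ a b : ℝ, a • u + b • v = z := by
  have hspan := h.span_eq_top_of_card_eq_finrank (by simp [hE])
  simp only [Matrix.range_cons, Matrix.range_empty, union_empty, singleton_union] at hspan
  exact Submodule.mem_span_pair.1 (hspan ▸ Submodule.mem_top)

lemma sub_mem_of_mem_sector_hexagon {D : Set E} (hD : Convex ℝ D) (hDc : IsClosed D)
    (hD0 : D ∈ 𝓝 0) (hsym : ∀ z ∈ D, -z ∈ D) {u v : E} (hu : gauge D u = 1)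
    (hv : gauge D v = 1) (hvu : gauge D (v - u) = 1) (k : Fin 6) {r : ℝ} (hr0 : 0 < r)
    (hr1 : r ≤ 1) {x y : E} (hx : gauge D x ≤ r) (hy : gauge D y ≤ r)
    (hxs : x ∈ sector (hexagon u v k) (hexagon u v (k + 1)))
    (hys : y ∈ sector (hexagon u v k) (hexagon u v (k + 1))) : x - y ∈ D := by
  have hmem : ∀ z, gauge D z ≤ 1 → z ∈ D := fun z hz =>
    hDc.closure_eq ▸ (gauge_le_one_iff_mem_closure hD hD0).1 hz
  have hscale : ∀ z, gauge D z ≤ r → r⁻¹ • z ∈ D := fun z hz => hmem _ <| by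
    rw [gauge_smul_of_nonneg (inv_nonneg.2 hr0.le), smul_eq_mul, inv_mul_le_one₀ hr0]
    exact hz
  have h0 : (0 : E) ∈ D := mem_of_mem_nhds hD0
  obtain ⟨hgk, hgk'⟩ := gauge_hexagon hsym hu hv hvu k
  have hgk1 := (gauge_hexagon hsym hu hv hvu (k + 1)).1
  have key := sub_mem_of_mem_sector hD h0 hsym (hmem _ hgk.le) (hmem _ hgk1.le) (hmem _ hgk'.le)
    hgk hgk1 (hscale x hx) (hscale y hy) (smul_mem_sector hxs (inv_nonneg.2 hr0.le))
    (smul_mem_sector hys (inv_nonneg.2 hr0.le))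
  rw [← smul_sub] at key
  simpa [smul_inv_smul₀ hr0.ne'] using hD.smul_mem_of_zero_mem h0 key ⟨hr0.le, hr1⟩

lemma Convex.mem_nhds_zero {D : Set E} (hD : Convex ℝ D) (hsym : ∀ z ∈ D, -z ∈ D)
    (hint : (interior D).Nonempty) : D ∈ 𝓝 0 := by
  obtain ⟨z, hz⟩ := hint
  have hz' : -z ∈ interior D := by
    rw [mem_interior_iff_mem_nhds] at hz ⊢
    exact Filter.mem_of_superset
      (continuous_neg.continuousAt.preimage_mem_nhds (by rwa [neg_neg]))
      fun w hw => by simpa using hsym _ hw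
  rw [← mem_interior_iff_mem_nhds]
  convert hD.interior hz hz' (by norm_num : (0 : ℝ) ≤ 1 / 2) (by norm_num : (0 : ℝ) ≤ 1 / 2)
    (by norm_num) using 1
  module

lemma exists_forall_mem_eq_smul_of_interior_eq_empty (hE : finrank ℝ E = 2) {D : Set E}
    (hD : Convex ℝ D) (h0 : (0 : E) ∈ D) (hint : interior D = ∅) :
    ∃ d : E, ∀ z ∈ D, ∃ l : ℝ, z = l • d := by
  have : FiniteDimensional ℝ E := Module.finite_of_finrank_eq_succ hE
  have hspan : vectorSpan ℝ D ≠ ⊤ := by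
    rw [Ne, ← AffineSubspace.affineSpan_eq_top_iff_vectorSpan_eq_top_of_nonempty ℝ E E ⟨0, h0⟩,
      ← hD.interior_nonempty_iff_affineSpan_eq_top, hint]
    exact not_nonempty_empty
  have hrank : finrank ℝ (vectorSpan ℝ D) ≤ 1 := by
    have := Submodule.finrank_lt hspan
    omega
  obtain ⟨d, hd⟩ := finrank_le_one_iff.1 hrank
  refine ⟨d, fun z hz => ?_⟩
  obtain ⟨l, hl⟩ := hd ⟨z, by simpa using vsub_mem_vectorSpan ℝ hz h0⟩
  exact ⟨l, by simpa using congrArg Subtype.val hl.symm⟩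

end Normed

lemma card_add_sum_le_sum_card_of_cover {ι κ : Type*} [Fintype κ] [DecidableEq ι]
    {s t : Finset ι} (T : κ → Finset ι) (hT : ∀ k, T k ⊆ s) (hcover : ∀ j ∈ s, ∃ k, j ∈ T k)
    (hts : t ⊆ s) :
    s.card + ∑ j ∈ t, ((Finset.univ.filter fun k => j ∈ T k).card - 1) ≤ ∑ k, (T k).card := by
  have hdouble : ∑ k, (T k).card = ∑ j ∈ s, (Finset.univ.filter fun k => j ∈ T k).card := by
    have := Finset.sum_card_bipartiteAbove_eq_sum_card_bipartiteBelow (fun k j => j ∈ T k)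
      (s := Finset.univ) (t := s)
    simpa [Finset.bipartiteAbove, Finset.bipartiteBelow, Finset.filter_mem_eq_inter,
      Finset.inter_eq_right.2 (hT _)] using this
  have hpos : ∀ j ∈ s, 1 ≤ (Finset.univ.filter fun k => j ∈ T k).card := fun j hj => by
    obtain ⟨k, hk⟩ := hcover j hj
    exact Finset.card_pos.2 ⟨k, by simpa using hk⟩
  calc s.card + ∑ j ∈ t, ((Finset.univ.filter fun k => j ∈ T k).card - 1)
      ≤ ∑ j ∈ s, 1 + ∑ j ∈ s, ((Finset.univ.filter fun k => j ∈ T k).card - 1) := by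
        rw [← Finset.card_eq_sum_ones]
        gcongr
    _ = ∑ k, (T k).card := by
        rw [hdouble, ← Finset.sum_add_distrib]
        exact Finset.sum_congr rfl fun j hj => by have := hpos j hj; omega

lemma card_add_card_le_card_mul_of_cover {ι κ : Type*} [Fintype κ] [DecidableEq ι]
    {s : Finset ι} {ω : ℕ} (T : κ → Finset ι) (hT : ∀ k, T k ⊆ s)
    (hcover : ∀ j ∈ s, ∃ k, j ∈ T k) (hω : ∀ k, (T k).card ≤ ω) {i j : ι} (hij : i ≠ j)
    (hi : ∀ k, i ∈ T k) {k₁ k₂ : κ} (hk : k₁ ≠ k₂) (hj₁ : j ∈ T k₁) (hj₂ : j ∈ T k₂) :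
    s.card + Fintype.card κ ≤ Fintype.card κ * ω := by
  classical
  have hcount := card_add_sum_le_sum_card_of_cover T hT hcover
    (Finset.insert_subset (hT k₁ (hi k₁)) (Finset.singleton_subset_iff.2 (hT k₁ hj₁)))
  rw [Finset.sum_pair hij, Finset.filter_true_of_mem fun k _ => hi k, Finset.card_univ]
    at hcount
  have hj : 2 ≤ (Finset.univ.filter fun k => j ∈ T k).card := by
    refine (Finset.card_pair hk).symm.trans_le (Finset.card_le_card fun k hk => ?_)
    rcases Finset.mem_insert.1 hk with rfl | hk
    · simpa using hj₁
    · simpa [Finset.mem_singleton.1 hk] using hj₂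
  have hsum : ∑ k, (T k).card ≤ Fintype.card κ * ω := by
    simpa using Finset.sum_le_sum fun k (_ : k ∈ Finset.univ) => hω k
  have := Fintype.card_pos_iff.2 ⟨k₁⟩
  omega

section Family

variable {E ι : Type*} {D : Set E} {x : ι → E} {s : Finset ι} {ω : ℕ}

theorem card_add_one_le_two_mul_of_forall_eq_smul [AddCommGroup E] [Module ℝ E] (hD : Convex ℝ D)
    (hsym : ∀ z ∈ D, -z ∈ D) (hs : ∀ j ∈ s, x j ∈ D) {d : E}
    (hd : ∀ j ∈ s, ∃ l : ℝ, x j = l • d) {i : ι} (hi : i ∈ s) (hxi : x i = 0)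
    (hcl : ∀ t ⊆ s, (t : Set ι).Pairwise (fun p q => x q - x p ∈ D) → t.card ≤ ω) :
    s.card + 1 ≤ 2 * ω := by
  classical
  have h0 : (0 : E) ∈ D := hxi ▸ hs i hi
  set T : Fin 2 → Finset ι := fun k => s.filter fun j => ∃ l : ℝ, 0 ≤ l ∧ x j = l • ![d, -d] k
  have hclique : ∀ k, (T k).card ≤ ω := fun k => by
    refine hcl _ (Finset.filter_subset _ _) fun p hp q hq _ => ?_
    obtain ⟨hp, a, ha, hpa⟩ := Finset.mem_filter.1 hp
    obtain ⟨hq, b, hb, hqb⟩ := Finset.mem_filter.1 hq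
    rw [hpa, hqb]
    exact hD.sub_mem_of_smul_mem h0 hsym hb ha (hqb ▸ hs q hq) (hpa ▸ hs p hp)
  have hcover : ∀ j ∈ s, ∃ k, j ∈ T k := fun j hj => by
    obtain ⟨l, hl⟩ := hd j hj
    rcases le_total 0 l with h | h
    · exact ⟨0, Finset.mem_filter.2 ⟨hj, l, h, by simpa using hl⟩⟩
    · exact ⟨1, Finset.mem_filter.2 ⟨hj, -l, by linarith, by simpa using hl⟩⟩
  have hiT : ∀ k, i ∈ T k := fun k => Finset.mem_filter.2 ⟨hi, 0, le_rfl, by simp [hxi]⟩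
  have := card_add_sum_le_sum_card_of_cover T (fun _ => Finset.filter_subset _ _) hcover
    (Finset.singleton_subset_iff.2 hi)
  simp only [Finset.sum_singleton, Finset.filter_true_of_mem fun k _ => hiT k, Finset.card_univ,
    Fintype.card_fin, Fin.sum_univ_two] at this
  have := hclique 0
  have := hclique 1
  omega

theorem card_add_six_le_six_mul_of_hexagon [NormedAddCommGroup E] [NormedSpace ℝ E]
    (hD : Convex ℝ D) (hDc : IsClosed D) (hD0 : D ∈ 𝓝 0) (hsym : ∀ z ∈ D, -z ∈ D) {u v : E}
    (hu : gauge D u = 1) (hv : gauge D v = 1) (hvu : gauge D (v - u) = 1)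
    (hspan : ∀ z : E, ∃ a b : ℝ, a • u + b • v = z) (hs : ∀ j ∈ s, x j ∈ D) {i js : ι}
    (hi : i ∈ s) (hxi : x i = 0) (hjs : js ∈ s) {r : ℝ} (hr0 : 0 < r) (hxjs : x js = r • u)
    (hmax : ∀ j ∈ s, gauge D (x j) ≤ r)
    (hcl : ∀ t ⊆ s, (t : Set ι).Pairwise (fun p q => x q - x p ∈ D) → t.card ≤ ω) :
    s.card + 6 ≤ 6 * ω := by
  classical
  have hr1 : r ≤ 1 := by
    simpa [hxjs, gauge_smul_of_nonneg hr0.le, hu] using gauge_le_one_of_mem (hs js hjs)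
  set T : Fin 6 → Finset ι := fun k =>
    s.filter fun j => x j ∈ sector (hexagon u v k) (hexagon u v (k + 1))
  have hclique : ∀ k, (T k).card ≤ ω := fun k => by
    refine hcl _ (Finset.filter_subset _ _) fun p hp q hq _ => ?_
    obtain ⟨hp, hps⟩ := Finset.mem_filter.1 hp
    obtain ⟨hq, hqs⟩ := Finset.mem_filter.1 hq
    exact sub_mem_of_mem_sector_hexagon hD hDc hD0 hsym hu hv hvu k hr0 hr1 (hmax q hq)
      (hmax p hp) hqs hps
  have hcover : ∀ j ∈ s, ∃ k, j ∈ T k := fun j hj =>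
    (exists_mem_sector_hexagon hspan (x j)).imp fun _ hk => Finset.mem_filter.2 ⟨hj, hk⟩
  have hiT : ∀ k, i ∈ T k := fun k => Finset.mem_filter.2 ⟨hi, hxi ▸ zero_mem_sector _ _⟩
  have hjs0 : js ∈ T 0 := Finset.mem_filter.2 ⟨hjs, r, 0, hr0.le, le_rfl, by simp [hexagon, hxjs]⟩
  have hjs5 : js ∈ T 5 := Finset.mem_filter.2 ⟨hjs, 0, r, le_rfl, hr0.le, by simp [hexagon, hxjs]⟩
  have hne : i ≠ js := by
    rintro rfl
    rw [hxi, eq_comm, smul_eq_zero] at hxjs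
    rcases hxjs with h | h
    · exact hr0.ne' h
    · simp [h] at hu
  simpa using card_add_card_le_card_mul_of_cover T (fun _ => Finset.filter_subset _ _) hcover
    hclique hne hiT (k₁ := 0) (k₂ := 5) (by decide) hjs0 hjs5

theorem card_add_six_le_six_mul_of_mem_nhds [NormedAddCommGroup E] [NormedSpace ℝ E]
    (hE : finrank ℝ E = 2) (hD : Convex ℝ D) (hDc : IsCompact D) (hsym : ∀ z ∈ D, -z ∈ D)
    (hD0 : D ∈ 𝓝 0) (hs : ∀ j ∈ s, x j ∈ D) {i m : ι} (hi : i ∈ s) (hxi : x i = 0)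
    (hm : m ∈ s) (hxm : x m ≠ 0)
    (hcl : ∀ t ⊆ s, (t : Set ι).Pairwise (fun p q => x q - x p ∈ D) → t.card ≤ ω) :
    s.card + 6 ≤ 6 * ω := by
  obtain ⟨js, hjs, hmax⟩ := s.exists_max_image (fun j => gauge D (x j)) ⟨i, hi⟩
  set r := gauge D (x js)
  have hr0 : 0 < r := ((gauge_pos (absorbent_nhds_zero hD0)
    ((NormedSpace.isVonNBounded_iff ℝ).2 hDc.isBounded)).2 hxm).trans_le (hmax m hm)
  have hu : gauge D (r⁻¹ • x js) = 1 := by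
    rw [gauge_smul_of_nonneg (inv_nonneg.2 hr0.le), smul_eq_mul, inv_mul_cancel₀ hr0.ne']
  obtain ⟨v, hv, hvu, hind⟩ := exists_hexagon hE hD hD0 hDc.isBounded hsym hu
  exact card_add_six_le_six_mul_of_hexagon hD hDc.isClosed hD0 hsym hu hv hvu
    (hind.exists_smul_add_smul_eq hE) hs hi hxi hjs hr0 (smul_inv_smul₀ hr0.ne' _).symm hmax hcl

end Family

theorem card_add_six_le_six_mul {E ι : Type*} [NormedAddCommGroup E] [NormedSpace ℝ E]
    (hE : finrank ℝ E = 2) {D : Set E} (hD : Convex ℝ D) (hDc : IsCompact D)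
    (hsym : ∀ z ∈ D, -z ∈ D) {x : ι → E} {s : Finset ι} (hs : ∀ j ∈ s, x j ∈ D) {i : ι}
    (hi : i ∈ s) (hxi : x i = 0) {ω : ℕ} (hω : 2 ≤ ω)
    (hcl : ∀ t ⊆ s, (t : Set ι).Pairwise (fun p q => x q - x p ∈ D) → t.card ≤ ω) :
    s.card + 6 ≤ 6 * ω := by
  by_cases hline : ∃ d : E, ∀ j ∈ s, ∃ l : ℝ, x j = l • d
  · obtain ⟨d, hd⟩ := hline
    have := card_add_one_le_two_mul_of_forall_eq_smul hD hsym hs hd hi hxi hcl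
    omega
  push Not at hline
  have hint : (interior D).Nonempty := by
    rw [nonempty_iff_ne_empty]
    intro hint
    obtain ⟨d, hd⟩ := exists_forall_mem_eq_smul_of_interior_eq_empty hE hD (hxi ▸ hs i hi) hint
    obtain ⟨j, hj, hjd⟩ := hline d
    obtain ⟨l, hl⟩ := hd _ (hs j hj)
    exact hjd l hl
  obtain ⟨m, hm, hxm⟩ := hline 0
  exact card_add_six_le_six_mul_of_mem_nhds hE hD hDc hsym (hD.mem_nhds_zero hsym hint) hs hi
    hxi hm (by simpa using hxm 0) hcl

lemma image_add_inter_image_add_nonempty_iff (K : Set (ℝ × ℝ)) (a b : ℝ × ℝ) :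
    (((fun p => p + a) '' K) ∩ ((fun p => p + b) '' K)).Nonempty ↔ b - a ∈ K - K := by
  constructor
  · rintro ⟨_, ⟨p, hp, rfl⟩, q, hq, hqp⟩
    exact ⟨p, hp, q, hq, by linear_combination hqp.symm⟩
  · rintro ⟨p, hp, q, hq, hpq⟩
    exact ⟨p + a, ⟨p, hp, rfl⟩, q, hq, by linear_combination -hpq⟩

lemma translatesGraph_adj {n : ℕ} {K : Set (ℝ × ℝ)} {tr : Fin n → ℝ × ℝ} {i j : Fin n} :
    (translatesGraph K tr).Adj i j ↔ i ≠ j ∧ tr j - tr i ∈ K - K := by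
  rw [translatesGraph, SimpleGraph.fromRel_adj, image_add_inter_image_add_nonempty_iff,
    image_add_inter_image_add_nonempty_iff, or_iff_left_of_imp fun h => by
      simpa using neg_mem_sub_self h]

theorem translatesGraph_ncard_adj_le {n ω : ℕ} {K : Set (ℝ × ℝ)} (hK : IsCompact K)
    (hKc : Convex ℝ K) (hKne : K.Nonempty) (tr : Fin n → ℝ × ℝ) (hω : 2 ≤ ω)
    (hcl : ∀ t : Finset (Fin n), (translatesGraph K tr).IsClique (t : Set (Fin n)) → t.card ≤ ω)
    (i : Fin n) : {j | (translatesGraph K tr).Adj i j}.ncard ≤ 6 * ω - 7 := by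
  classical
  set N := Finset.univ.filter fun j => (translatesGraph K tr).Adj i j
  have hN : {j | (translatesGraph K tr).Adj i j}.ncard = N.card := by
    rw [← ncard_coe_finset]
    simp [N]
  have hiN : i ∉ N := by simp [N]
  have hKK : IsCompact (K - K) := by
    rw [sub_eq_add_neg]
    exact hK.add hK.neg
  have hmem : ∀ j ∈ insert i N, tr j - tr i ∈ K - K := by
    intro j hj
    rcases Finset.mem_insert.1 hj with rfl | hj
    · obtain ⟨p, hp⟩ := hKne
      simpa using sub_mem_sub hp hp
    · exact (translatesGraph_adj.1 (Finset.mem_filter.1 hj).2).2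
  have hbound := card_add_six_le_six_mul (by simp) (hKc.sub hKc) hKK (fun _ => neg_mem_sub_self)
    (x := fun j => tr j - tr i) hmem (Finset.mem_insert_self i N) (sub_self _) hω
    fun t _ ht => hcl t fun p hp q hq hpq =>
      translatesGraph_adj.2 ⟨hpq, by simpa using ht hp hq hpq⟩
  rw [Finset.card_insert_of_notMem hiN] at hbound
  omega

lemma SimpleGraph.le_ncard_of_forall_lt_exists_adj {V : Type*} [Finite V] (G : SimpleGraph V)
    (col : V → ℕ) (i : V) (h : ∀ m < col i, ∃ j, G.Adj i j ∧ col j = m) :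
    col i ≤ {j | G.Adj i j}.ncard :=
  calc col i = (Iio (col i)).ncard := (ncard_Iio_nat _).symm
    _ ≤ (col '' {j | G.Adj i j}).ncard := ncard_le_ncard h (toFinite _)
    _ ≤ {j | G.Adj i j}.ncard := ncard_image_le (toFinite _)

/-- If G is the intersection graph of finitely many translates of a fixed
compact convex set in the plane with clique number ω ≥ 2, then every vertex has degree
at most 6ω − 7, and hence any greedy on-line coloring (which gives a vertex a color
already forced by earlier neighbors whenever possible, i.e. introduces a new color only
when it has to) uses at most 6ω − 6 colors, in any presentation order. -/
theorem stmt16 {n ω : ℕ} (K : Set (ℝ × ℝ)) (hK : IsCompact K) (hKc : Convex ℝ K)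
    (tr : Fin n → ℝ × ℝ) (hω : 2 ≤ ω)
    (hclique : IsGreatest
      {m : ℕ | ∃ s : Finset (Fin n), (translatesGraph K tr).IsNClique m s} ω) :
    (∀ i : Fin n, {j | (translatesGraph K tr).Adj i j}.ncard ≤ 6 * ω - 7) ∧
    (∀ col : Fin n → ℕ,
      (∀ i j : Fin n, j < i → (translatesGraph K tr).Adj i j → col j ≠ col i) →
      (∀ i : Fin n, ∀ m < col i, ∃ j, j < i ∧ (translatesGraph K tr).Adj i j ∧
        col j = m) →
      ∀ i : Fin n, col i < 6 * ω - 6) := by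
  have hKne : K.Nonempty := by
    obtain ⟨t, ht⟩ := hclique.1
    obtain ⟨a, ha, b, hb, hab⟩ := Finset.one_lt_card.1 (by rw [ht.card_eq]; omega)
    exact Nonempty.of_sub_left ⟨_, (translatesGraph_adj.1 (ht.isClique ha hb hab)).2⟩
  have hdeg := translatesGraph_ncard_adj_le hK hKc hKne tr hω
    fun t ht => hclique.2 ⟨t, ht, rfl⟩
  refine ⟨hdeg, fun col _ hgreedy i => ?_⟩
  have := (translatesGraph K tr).le_ncard_of_forall_lt_exists_adj col i
    fun m hm => (hgreedy i m hm).imp fun _ hj => hj.2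
  have := hdeg i
  omega
end
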